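/- arXiv:2502.05185 — 12 statements merged into one kernel-verified Lean document; each statement's English description precedes it below -/
import Mathlib

section
/- If in a three-candidate complete-ballot profile p some candidate's first-place total strictly exceeds half of the total vote V (a majority candidate exists), then p demonstrates no reinforcement paradox: there is no candidate W and no partition p = p1 + p2 such that W wins strictly in both p1 and p2 while W does not win strictly in p. -/
/-- A three-candidate complete-ballot profile: numbers of ballots with rankings
A≻B≻C, A≻C≻B, B≻A≻C, B≻C≻A, C≻A≻B, C≻B≻A respectively. -/
structure Profile where
  x1 : ℝ
  x2 : ℝ
  y1 : ℝ
  y2 : ℝ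
  z1 : ℝ
  z2 : ℝ

namespace Profile

def nonneg (p : Profile) : Prop :=
  0 ≤ p.x1 ∧ 0 ≤ p.x2 ∧ 0 ≤ p.y1 ∧ 0 ≤ p.y2 ∧ 0 ≤ p.z1 ∧ 0 ≤ p.z2

instance : Add Profile :=
  ⟨fun p q => ⟨p.x1 + q.x1, p.x2 + q.x2, p.y1 + q.y1, p.y2 + q.y2, p.z1 + q.z1, p.z2 + q.z2⟩⟩

/-- First-place total of candidate A. -/
def X (p : Profile) : ℝ := p.x1 + p.x2
/-- First-place total of candidate B. -/
def Y (p : Profile) : ℝ := p.y1 + p.y2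
/-- First-place total of candidate C. -/
def Z (p : Profile) : ℝ := p.z1 + p.z2
/-- Total vote. -/
def V (p : Profile) : ℝ := p.X + p.Y + p.Z

end Profile

inductive Cand | A | B | C

/-- Candidate `W` wins strictly under IRV in profile `p`. -/
def wins : Cand → Profile → Prop
  | Cand.A, p => p.X > p.Y + p.Z ∨
      (p.Z < p.X ∧ p.Z < p.Y ∧ p.X + p.z1 > p.Y + p.z2) ∨
      (p.Y < p.X ∧ p.Y < p.Z ∧ p.X + p.y1 > p.Z + p.y2)
  | Cand.B, p => p.Y > p.X + p.Z ∨
      (p.Z < p.Y ∧ p.Z < p.X ∧ p.Y + p.z2 > p.X + p.z1) ∨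
      (p.X < p.Y ∧ p.X < p.Z ∧ p.Y + p.x1 > p.Z + p.x2)
  | Cand.C, p => p.Z > p.X + p.Y ∨
      (p.X < p.Z ∧ p.X < p.Y ∧ p.Z + p.x2 > p.Y + p.x1) ∨
      (p.Y < p.Z ∧ p.Y < p.X ∧ p.Z + p.y2 > p.X + p.y1)

/-- Profile `p` demonstrates a reinforcement paradox for candidate `W`: there is a
partition `p = p1 + p2` into profiles with nonnegative entries such that `W` wins
strictly in both `p1` and `p2` but `W` does not win strictly in `p`. -/
def paradox (W : Cand) (p : Profile) : Prop :=
  ∃ p1 p2 : Profile, p1.nonneg ∧ p2.nonneg ∧ p1 + p2 = p ∧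
    wins W p1 ∧ wins W p2 ∧ ¬ wins W p

/-- If B has a strict majority, A does not win. -/
lemma notA_Y (p : Profile) (hn : p.nonneg) (h : p.Y > p.X + p.Z) : ¬ wins Cand.A p := by
  obtain ⟨a, b, c, d, e, f⟩ := hn
  simp only [wins, Profile.X, Profile.Y, Profile.Z] at *
  rintro (h1 | ⟨h1, h2, h3⟩ | ⟨h1, h2, h3⟩) <;> linarith

lemma notA_Z (p : Profile) (hn : p.nonneg) (h : p.Z > p.X + p.Y) : ¬ wins Cand.A p := by
  obtain ⟨a, b, c, d, e, f⟩ := hn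
  simp only [wins, Profile.X, Profile.Y, Profile.Z] at *
  rintro (h1 | ⟨h1, h2, h3⟩ | ⟨h1, h2, h3⟩) <;> linarith

lemma notB_X (p : Profile) (hn : p.nonneg) (h : p.X > p.Y + p.Z) : ¬ wins Cand.B p := by
  obtain ⟨a, b, c, d, e, f⟩ := hn
  simp only [wins, Profile.X, Profile.Y, Profile.Z] at *
  rintro (h1 | ⟨h1, h2, h3⟩ | ⟨h1, h2, h3⟩) <;> linarith

lemma notB_Z (p : Profile) (hn : p.nonneg) (h : p.Z > p.X + p.Y) : ¬ wins Cand.B p := by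
  obtain ⟨a, b, c, d, e, f⟩ := hn
  simp only [wins, Profile.X, Profile.Y, Profile.Z] at *
  rintro (h1 | ⟨h1, h2, h3⟩ | ⟨h1, h2, h3⟩) <;> linarith

lemma notC_X (p : Profile) (hn : p.nonneg) (h : p.X > p.Y + p.Z) : ¬ wins Cand.C p := by
  obtain ⟨a, b, c, d, e, f⟩ := hn
  simp only [wins, Profile.X, Profile.Y, Profile.Z] at *
  rintro (h1 | ⟨h1, h2, h3⟩ | ⟨h1, h2, h3⟩) <;> linarith

lemma notC_Y (p : Profile) (hn : p.nonneg) (h : p.Y > p.X + p.Z) : ¬ wins Cand.C p := by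
  obtain ⟨a, b, c, d, e, f⟩ := hn
  simp only [wins, Profile.X, Profile.Y, Profile.Z] at *
  rintro (h1 | ⟨h1, h2, h3⟩ | ⟨h1, h2, h3⟩) <;> linarith

theorem stmt0 (p : Profile) (hp : p.nonneg)
    (hmaj : p.X > p.V / 2 ∨ p.Y > p.V / 2 ∨ p.Z > p.V / 2) :
    ¬ ∃ W : Cand, paradox W p := by
  rintro ⟨W, p1, p2, hn1, hn2, hsum, hw1, hw2, hnw⟩
  have hx1 : p1.x1 + p2.x1 = p.x1 := congrArg Profile.x1 hsum
  have hx2 : p1.x2 + p2.x2 = p.x2 := congrArg Profile.x2 hsum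
  have hy1 : p1.y1 + p2.y1 = p.y1 := congrArg Profile.y1 hsum
  have hy2 : p1.y2 + p2.y2 = p.y2 := congrArg Profile.y2 hsum
  have hz1 : p1.z1 + p2.z1 = p.z1 := congrArg Profile.z1 hsum
  have hz2 : p1.z2 + p2.z2 = p.z2 := congrArg Profile.z2 hsum
  simp only [Profile.X, Profile.Y, Profile.Z, Profile.V] at hmaj
  rcases hmaj with hm | hm | hm
  · -- A has strict majority in p
    have key : p1.Y + p1.Z < p1.X ∨ p2.Y + p2.Z < p2.X := by
      by_contra h
      push_neg at h
      obtain ⟨k1, k2⟩ := h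
      simp only [Profile.X, Profile.Y, Profile.Z] at k1 k2
      linarith
    cases W with
    | A =>
      exact hnw (Or.inl (by simp only [Profile.X, Profile.Y, Profile.Z]; linarith))
    | B =>
      rcases key with k | k
      · exact notB_X p1 hn1 k hw1
      · exact notB_X p2 hn2 k hw2
    | C =>
      rcases key with k | k
      · exact notC_X p1 hn1 k hw1
      · exact notC_X p2 hn2 k hw2
  · -- B has strict majority in p
    have key : p1.X + p1.Z < p1.Y ∨ p2.X + p2.Z < p2.Y := by
      by_contra h
      push_neg at h
      obtain ⟨k1, k2⟩ := h
      simp only [Profile.X, Profile.Y, Profile.Z] at k1 k2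
      linarith
    cases W with
    | A =>
      rcases key with k | k
      · exact notA_Y p1 hn1 k hw1
      · exact notA_Y p2 hn2 k hw2
    | B =>
      exact hnw (Or.inl (by simp only [Profile.X, Profile.Y, Profile.Z]; linarith))
    | C =>
      rcases key with k | k
      · exact notC_Y p1 hn1 k hw1
      · exact notC_Y p2 hn2 k hw2
  · -- C has strict majority in p
    have key : p1.X + p1.Y < p1.Z ∨ p2.X + p2.Y < p2.Z := by
      by_contra h
      push_neg at h
      obtain ⟨k1, k2⟩ := h
      simp only [Profile.X, Profile.Y, Profile.Z] at k1 k2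
      linarith
    cases W with
    | A =>
      rcases key with k | k
      · exact notA_Z p1 hn1 k hw1
      · exact notA_Z p2 hn2 k hw2
    | B =>
      rcases key with k | k
      · exact notB_Z p1 hn1 k hw1
      · exact notB_Z p2 hn2 k hw2
    | C =>
      exact hnw (Or.inl (by simp only [Profile.X, Profile.Y, Profile.Z]; linarith))
end

section
/- (Proposition 1, runner-up case.) Let p be a three-candidate complete-ballot profile satisfying the background assumptions Z < X, Z < Y, and Y + Z2 < X + Z1. Then p demonstrates a reinforcement paradox for the runner-up B if and only if either (1) Y > X and Y > −X1 + X2 + Z, or (2) Y > X − Z2 and Y > −X1 + X2 + Z1 − Z2. -/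
lemma winsB_iff (q : Profile) : wins Cand.B q ↔ (q.Y > q.X + q.Z ∨
      (q.Z < q.Y ∧ q.Z < q.X ∧ q.Y + q.z2 > q.X + q.z1) ∨
      (q.X < q.Y ∧ q.X < q.Z ∧ q.Y + q.x1 > q.Z + q.x2)) := Iff.rfl

lemma notB (x1 x2 y1 y2 z1 z2 : ℝ) (hz2 : 0 ≤ z2)
    (hZX : z1 + z2 < x1 + x2) (h3 : y1 + y2 + z2 < x1 + x2 + z1) :
    ¬ wins Cand.B ⟨x1, x2, y1, y2, z1, z2⟩ := by
  rw [winsB_iff]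
  simp only [Profile.X, Profile.Y, Profile.Z]
  rintro (h | ⟨ha, hb, hc⟩ | ⟨ha, hb, hc⟩) <;> linarith

lemma build (x1 x2 y1 y2 z1 z2 a s B1 : ℝ)
    (hx1 : 0 ≤ x1) (hx2 : 0 ≤ x2) (hy1 : 0 ≤ y1) (hy2 : 0 ≤ y2)
    (hz1 : 0 ≤ z1) (hz2 : 0 ≤ z2)
    (hZX : z1 + z2 < x1 + x2) (h3 : y1 + y2 + z2 < x1 + x2 + z1)
    (ha0 : 0 ≤ a) (hax : a ≤ x1) (hs0 : 0 ≤ s) (hsz : s ≤ z2)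
    (hB0 : 0 ≤ B1) (hBY : B1 ≤ y1 + y2)
    (hw1 : wins Cand.B ⟨x1 - a, x2, min y1 B1, B1 - min y1 B1, 0, s⟩)
    (hw2 : wins Cand.B ⟨a, 0, y1 - min y1 B1, y2 - (B1 - min y1 B1), z1, z2 - s⟩) :
    paradox Cand.B ⟨x1, x2, y1, y2, z1, z2⟩ := by
  have hm1 : min y1 B1 ≤ y1 := min_le_left _ _
  have hm2 : min y1 B1 ≤ B1 := min_le_right _ _
  have hm3 : B1 - min y1 B1 ≤ y2 := by
    rcases le_total y1 B1 with h | h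
    · rw [min_eq_left h]; linarith
    · rw [min_eq_right h]; linarith
  refine ⟨⟨x1 - a, x2, min y1 B1, B1 - min y1 B1, 0, s⟩,
    ⟨a, 0, y1 - min y1 B1, y2 - (B1 - min y1 B1), z1, z2 - s⟩,
    ⟨show (0:ℝ) ≤ x1 - a by linarith, hx2, le_min hy1 hB0,
      show (0:ℝ) ≤ B1 - min y1 B1 by linarith, le_refl 0, hs0⟩,
    ⟨ha0, le_refl 0, show (0:ℝ) ≤ y1 - min y1 B1 by linarith,
      show (0:ℝ) ≤ y2 - (B1 - min y1 B1) by linarith, hz1,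
      show (0:ℝ) ≤ z2 - s by linarith⟩,
    ?_, hw1, hw2, notB x1 x2 y1 y2 z1 z2 hz2 hZX h3⟩
  show Profile.mk _ _ _ _ _ _ = _
  simp only [Profile.mk.injEq]
  refine ⟨by ring, by ring, by ring, by ring, by ring, by ring⟩

lemma build2 (x1 x2 y1 y2 z1 z2 a s : ℝ)
    (hx1 : 0 ≤ x1) (hx2 : 0 ≤ x2) (hy1 : 0 ≤ y1) (hy2 : 0 ≤ y2)
    (hz1 : 0 ≤ z1) (hz2 : 0 ≤ z2)
    (hZX : z1 + z2 < x1 + x2) (h3 : y1 + y2 + z2 < x1 + x2 + z1)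
    (ha0 : 0 ≤ a) (hax : a ≤ x1) (hs0 : 0 ≤ s) (hsz : s ≤ z2)
    (hsX : s < x1 + x2 - a ∨ (s ≤ 0 ∧ x1 + x2 - a ≤ 0))
    (haZ : a < z1 + z2 - s)
    (hG1 : s + a < y1 + y2)
    (hG2 : s + (z1 + z2 - s - a) < y1 + y2)
    (hG3 : (x1 + x2 - a - s) + a < y1 + y2)
    (hG4 : (x1 + x2 - a - s) + (z1 + z2 - s - a) < y1 + y2) :
    paradox Cand.B ⟨x1, x2, y1, y2, z1, z2⟩ := by
  have hG : max s (x1 + x2 - a - s) + max a (z1 + z2 - s - a) < y1 + y2 := by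
    rcases max_cases s (x1 + x2 - a - s) with ⟨e1, _⟩ | ⟨e1, _⟩ <;>
      rcases max_cases a (z1 + z2 - s - a) with ⟨e2, _⟩ | ⟨e2, _⟩ <;>
      rw [e1, e2] <;> linarith
  set d : ℝ := (y1 + y2 - (max s (x1 + x2 - a - s) + max a (z1 + z2 - s - a))) / 2 with hd
  have hdpos : 0 < d := by rw [hd]; linarith
  set B1 : ℝ := max s (x1 + x2 - a - s) + d with hB
  have k1 : s + d ≤ B1 := add_le_add_left (le_max_left _ _) d
  have k2 : (x1 + x2 - a - s) + d ≤ B1 := add_le_add_left (le_max_right _ _) d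
  have key : y1 + y2 - B1 = max a (z1 + z2 - s - a) + d := by rw [hB, hd]; ring
  have k3 : a + d ≤ y1 + y2 - B1 := by rw [key]; exact add_le_add_left (le_max_left _ _) d
  have k4 : (z1 + z2 - s - a) + d ≤ y1 + y2 - B1 := by
    rw [key]; exact add_le_add_left (le_max_right _ _) d
  have hB0 : 0 ≤ B1 := by linarith
  have hBY : B1 ≤ y1 + y2 := by linarith
  refine build x1 x2 y1 y2 z1 z2 a s B1 hx1 hx2 hy1 hy2 hz1 hz2 hZX h3 ha0 hax hs0 hsz hB0 hBY ?_ ?_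
  · rw [winsB_iff]
    simp only [Profile.X, Profile.Y, Profile.Z]
    rcases hsX with hlt | ⟨hs0', hx0'⟩
    · exact Or.inr (Or.inl ⟨by linarith, by linarith, by linarith⟩)
    · exact Or.inl (by linarith)
  · rw [winsB_iff]
    simp only [Profile.X, Profile.Y, Profile.Z]
    exact Or.inr (Or.inr ⟨by linarith, by linarith, by linarith⟩)

theorem stmt1 (p : Profile) (hp : p.nonneg)
    (h1 : p.Z < p.X) (h2 : p.Z < p.Y) (h3 : p.Y + p.z2 < p.X + p.z1) :
    paradox Cand.B p ↔
      ((p.Y > p.X ∧ p.Y > -p.x1 + p.x2 + p.Z) ∨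
       (p.Y > p.X - p.z2 ∧ p.Y > -p.x1 + p.x2 + p.z1 - p.z2)) := by
  obtain ⟨x1, x2, y1, y2, z1, z2⟩ := p
  simp only [Profile.X, Profile.Y, Profile.Z, Profile.nonneg] at hp h1 h2 h3 ⊢
  obtain ⟨hx1, hx2, hy1, hy2, hz1, hz2⟩ := hp
  constructor
  · rintro ⟨⟨a1, a2, b1, b2, c1, c2⟩, ⟨d1, d2, e1, e2, f1, f2⟩, hn1, hn2, hsum, hw1, hw2, -⟩
    simp only [Profile.nonneg] at hn1 hn2
    obtain ⟨ha1, ha2, hb1, hb2, hc1, hc2⟩ := hn1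
    obtain ⟨hd1, hd2, he1, he2, hf1, hf2⟩ := hn2
    have q1 : a1 + d1 = x1 := congrArg Profile.x1 hsum
    have q2 : a2 + d2 = x2 := congrArg Profile.x2 hsum
    have q3 : b1 + e1 = y1 := congrArg Profile.y1 hsum
    have q4 : b2 + e2 = y2 := congrArg Profile.y2 hsum
    have q5 : c1 + f1 = z1 := congrArg Profile.z1 hsum
    have q6 : c2 + f2 = z2 := congrArg Profile.z2 hsum
    rw [winsB_iff] at hw1 hw2
    simp only [Profile.X, Profile.Y, Profile.Z] at hw1 hw2
    rcases hw1 with hA | ⟨hB1, hB2, hB3⟩ | ⟨hC1, hC2, hC3⟩ <;>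
      rcases hw2 with hA' | ⟨hB1', hB2', hB3'⟩ | ⟨hC1', hC2', hC3'⟩ <;>
      first
        | exact Or.inl ⟨by linarith, by linarith⟩
        | exact Or.inr ⟨by linarith, by linarith⟩
  · rintro h
    have hca : x1 + x2 - z2 < y1 + y2 := by
      rcases h with ⟨ha', hb'⟩ | ⟨ha', hb'⟩ <;> linarith
    have hcb : x2 - x1 + z1 - z2 < y1 + y2 := by
      rcases h with ⟨ha', hb'⟩ | ⟨ha', hb'⟩ <;> linarith
    have hz1p : 0 < z1 := by linarith
    rcases le_total z2 ((2 * (x1 + x2) - (z1 + z2)) / 3) with hb | hb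
    · rcases le_total x1 (z1 / 2) with hx | hx
      · rcases le_total (x2 / 2) z2 with hs | hs
        · -- a = x1, s = x2/2
          refine build2 x1 x2 y1 y2 z1 z2 x1 (x2 / 2) hx1 hx2 hy1 hy2 hz1 hz2 h1 h3
            hx1 le_rfl (by linarith) hs ?_ (by linarith) (by linarith) (by linarith)
            (by linarith) (by linarith)
          rcases eq_or_lt_of_le hx2 with h0 | h0
          · exact Or.inr ⟨by linarith, by linarith⟩
          · exact Or.inl (by linarith)
        · -- a = x1, s = z2
          refine build2 x1 x2 y1 y2 z1 z2 x1 z2 hx1 hx2 hy1 hy2 hz1 hz2 h1 h3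
            hx1 le_rfl hz2 le_rfl ?_ (by linarith) (by linarith) (by linarith)
            (by linarith) (by linarith)
          rcases eq_or_lt_of_le hx2 with h0 | h0
          · exact Or.inr ⟨by linarith, by linarith⟩
          · exact Or.inl (by linarith)
      · -- a = z1/2, s = z2
        exact build2 x1 x2 y1 y2 z1 z2 (z1 / 2) z2 hx1 hx2 hy1 hy2 hz1 hz2 h1 h3
          (by linarith) hx hz2 le_rfl (Or.inl (by linarith)) (by linarith) (by linarith)
          (by linarith) (by linarith) (by linarith)
    · rcases le_total x1 ((2 * (z1 + z2) - (x1 + x2)) / 3) with hx | hx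
      · rcases le_total (x2 / 2) z2 with hs | hs
        · -- a = x1, s = x2/2
          refine build2 x1 x2 y1 y2 z1 z2 x1 (x2 / 2) hx1 hx2 hy1 hy2 hz1 hz2 h1 h3
            hx1 le_rfl (by linarith) hs ?_ (by linarith) (by linarith) (by linarith)
            (by linarith) (by linarith)
          rcases eq_or_lt_of_le hx2 with h0 | h0
          · exact Or.inr ⟨by linarith, by linarith⟩
          · exact Or.inl (by linarith)
        · -- a = x1, s = z2
          refine build2 x1 x2 y1 y2 z1 z2 x1 z2 hx1 hx2 hy1 hy2 hz1 hz2 h1 h3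
            hx1 le_rfl hz2 le_rfl ?_ (by linarith) (by linarith) (by linarith)
            (by linarith) (by linarith)
          rcases eq_or_lt_of_le hx2 with h0 | h0
          · exact Or.inr ⟨by linarith, by linarith⟩
          · exact Or.inl (by linarith)
      · -- a = (2Z - X)/3, s = (2X - Z)/3
        exact build2 x1 x2 y1 y2 z1 z2 ((2 * (z1 + z2) - (x1 + x2)) / 3)
          ((2 * (x1 + x2) - (z1 + z2)) / 3) hx1 hx2 hy1 hy2 hz1 hz2 h1 h3
          (by linarith) hx (by linarith) hb (Or.inl (by linarith)) (by linarith)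
          (by linarith) (by linarith) (by linarith) (by linarith)
end

section
/- (Proposition 1, plurality loser case.) Let p be a three-candidate complete-ballot profile satisfying the background assumptions Z < X, Z < Y, and Y + Z2 < X + Z1. Then p demonstrates a reinforcement paradox for the plurality loser C if and only if Z > X − Y2, Z > X1 − X2 + Y1 − Y2, Z > −X2 + Y, and Z > (X + Y)/3. -/
/-- Auxiliary construction: given suitable parameters `u, w, c`, build a partition
demonstrating that C wins in both parts. -/
lemma build_partition (x1 x2 y1 y2 z1 z2 u w c : ℝ)
    (hx1 : 0 ≤ x1) (hy1 : 0 ≤ y1) (hz1 : 0 ≤ z1) (hz2 : 0 ≤ z2)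
    (hu0 : 0 ≤ u) (huy : u ≤ y2) (hw0 : 0 ≤ w) (hwx : w ≤ x2)
    (hc0 : 0 ≤ c) (hcZ : c ≤ z1 + z2)
    (hc1 : u < c) (hc2 : x1 + x2 - u - w < c)
    (hc3 : w < z1 + z2 - c) (hc4 : y1 + y2 - u - w < z1 + z2 - c)
    (hXs : u + w < x1 + x2) (hYs : u + w < y1 + y2) :
    ∃ p1 p2 : Profile, p1.nonneg ∧ p2.nonneg ∧
      p1 + p2 = Profile.mk x1 x2 y1 y2 z1 z2 ∧
      wins Cand.C p1 ∧ wins Cand.C p2 := by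
  obtain ⟨m, hm0, hm1, hm2, hm3⟩ : ∃ m, 0 ≤ m ∧ m ≤ z1 ∧ 0 ≤ c - m ∧ c - m ≤ z2 := by
    rcases le_total c z1 with h | h
    · exact ⟨c, hc0, h, by linarith, by linarith⟩
    · exact ⟨z1, hz1, le_refl _, by linarith, by linarith⟩
  refine ⟨⟨x1, x2 - w, 0, u, m, c - m⟩,
          ⟨0, w, y1, y2 - u, z1 - m, z2 - (c - m)⟩, ?_, ?_, ?_, ?_, ?_⟩
  · refine ⟨?_, ?_, ?_, ?_, ?_, ?_⟩ <;> dsimp only <;> linarith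
  · refine ⟨?_, ?_, ?_, ?_, ?_, ?_⟩ <;> dsimp only <;> linarith
  · show Profile.mk (x1 + 0) ((x2 - w) + w) (0 + y1) (u + (y2 - u))
        (m + (z1 - m)) ((c - m) + (z2 - (c - m))) = Profile.mk x1 x2 y1 y2 z1 z2
    simp only [Profile.mk.injEq]
    refine ⟨by ring, by ring, by ring, by ring, by ring, by ring⟩
  · refine Or.inr (Or.inr ?_)
    simp only [Profile.X, Profile.Y, Profile.Z]
    refine ⟨by linarith, by linarith, by linarith⟩
  · refine Or.inr (Or.inl ?_)
    simp only [Profile.X, Profile.Y, Profile.Z]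
    refine ⟨by linarith, by linarith, by linarith⟩

theorem stmt2 (p : Profile) (hp : p.nonneg)
    (h1 : p.Z < p.X) (h2 : p.Z < p.Y) (h3 : p.Y + p.z2 < p.X + p.z1) :
    paradox Cand.C p ↔
      (p.Z > p.X - p.y2 ∧ p.Z > p.x1 - p.x2 + p.y1 - p.y2 ∧
       p.Z > -p.x2 + p.Y ∧ p.Z > (p.X + p.Y) / 3) := by
  obtain ⟨x1, x2, y1, y2, z1, z2⟩ := p
  obtain ⟨hx1, hx2, hy1, hy2, hz1, hz2⟩ := hp
  simp only [Profile.X, Profile.Y, Profile.Z] at h1 h2 h3 ⊢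
  constructor
  · rintro ⟨p1, p2, ⟨n11, n12, n13, n14, n15, n16⟩, ⟨n21, n22, n23, n24, n25, n26⟩,
      hsum, hw1, hw2, -⟩
    have e1 : p1.x1 + p2.x1 = x1 := congrArg Profile.x1 hsum
    have e2 : p1.x2 + p2.x2 = x2 := congrArg Profile.x2 hsum
    have e3 : p1.y1 + p2.y1 = y1 := congrArg Profile.y1 hsum
    have e4 : p1.y2 + p2.y2 = y2 := congrArg Profile.y2 hsum
    have e5 : p1.z1 + p2.z1 = z1 := congrArg Profile.z1 hsum
    have e6 : p1.z2 + p2.z2 = z2 := congrArg Profile.z2 hsum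
    simp only [wins, Profile.X, Profile.Y, Profile.Z] at hw1 hw2
    rcases hw1 with ha | ⟨ha, hb, hc⟩ | ⟨ha, hb, hc⟩ <;>
      rcases hw2 with ha' | ⟨ha', hb', hc'⟩ | ⟨ha', hb', hc'⟩ <;>
      exact ⟨by linarith, by linarith, by linarith, by linarith⟩
  · rintro ⟨c1, c2, c3, c4⟩
    have hZpos : 0 < z1 + z2 := by linarith
    set s : ℝ := ((x1 + x2 + y1 + y2 - (z1 + z2)) / 2
        + min (z1 + z2) (x2 + y2)) / 2 with hs_def
    have hmin1 : min (z1 + z2) (x2 + y2) ≤ z1 + z2 := min_le_left _ _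
    have hmin2 : min (z1 + z2) (x2 + y2) ≤ x2 + y2 := min_le_right _ _
    have hmin3 : (x1 + x2 + y1 + y2 - (z1 + z2)) / 2 < min (z1 + z2) (x2 + y2) :=
      lt_min (by linarith) (by linarith)
    have hs0 : (x1 + x2 + y1 + y2 - (z1 + z2)) / 2 < s := by
      rw [hs_def]; linarith
    have hs1 : s < z1 + z2 := by rw [hs_def]; linarith
    have hs2 : s < x2 + y2 := by rw [hs_def]; linarith
    clear_value s
    obtain ⟨u, w, hu0, huy, hw0, hwx, hXZu, hYZw, huws⟩ :
        ∃ u w, 0 ≤ u ∧ u ≤ y2 ∧ 0 ≤ w ∧ w ≤ x2 ∧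
          x1 + x2 - (z1 + z2) < u ∧ y1 + y2 - (z1 + z2) < w ∧ u + w = s := by
      rcases le_total ((s + (x1 + x2) - (y1 + y2)) / 2) y2 with h | h
      · rcases le_total ((s + (y1 + y2) - (x1 + x2)) / 2) x2 with h' | h'
        · exact ⟨(s + (x1 + x2) - (y1 + y2)) / 2, (s + (y1 + y2) - (x1 + x2)) / 2,
            by linarith, h, by linarith, h', by linarith, by linarith, by ring⟩
        · exact ⟨s - x2, x2, by linarith, by linarith, by linarith, le_refl _,
            by linarith, by linarith, by ring⟩
      · exact ⟨y2, s - y2, hy2, le_refl _, by linarith, by linarith,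
          by linarith, by linarith, by ring⟩
    set M1 : ℝ := max u (x1 + x2 - u - w) with hM1_def
    set M2 : ℝ := max w (y1 + y2 - u - w) with hM2_def
    have hM1a : u ≤ M1 := le_max_left _ _
    have hM1b : x1 + x2 - u - w ≤ M1 := le_max_right _ _
    have hM2a : w ≤ M2 := le_max_left _ _
    have hM2b : y1 + y2 - u - w ≤ M2 := le_max_right _ _
    have hMsum : M1 + M2 < z1 + z2 := by
      rw [hM1_def, hM2_def]
      rcases le_total u (x1 + x2 - u - w) with h | h <;>
        rcases le_total w (y1 + y2 - u - w) with h' | h' <;>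
        [rw [max_eq_right h, max_eq_right h'];
         rw [max_eq_right h, max_eq_left h'];
         rw [max_eq_left h, max_eq_right h'];
         rw [max_eq_left h, max_eq_left h']] <;> linarith
    clear_value M1 M2
    obtain ⟨p1, p2, hn1, hn2, hsum, hw1, hw2⟩ :=
      build_partition x1 x2 y1 y2 z1 z2 u w ((M1 + (z1 + z2) - M2) / 2)
        hx1 hy1 hz1 hz2 hu0 huy hw0 hwx (by linarith) (by linarith)
        (by linarith) (by linarith) (by linarith) (by linarith)
        (by linarith) (by linarith)
    refine ⟨p1, p2, hn1, hn2, hsum, hw1, hw2, ?_⟩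
    rintro (h | ⟨h, -, -⟩ | ⟨h, -, -⟩) <;>
      simp only [Profile.X, Profile.Y, Profile.Z] at h <;> linarith
end

section
/- (Proposition 1, Case (1) addendum.) Let p be a three-candidate complete-ballot profile satisfying the background assumptions Z < X, Z < Y, and Y + Z2 < X + Z1, and suppose Y > X and Y > −X1 + X2 + Z. Then there exists a partition p = p1 + p2 such that B wins strictly in both p1 and p2, B's first-place total in p1 strictly exceeds half of the total vote of p1 (B wins p1 by majority), and in p2 candidate A's first-place total is strictly smaller than the first-place totals of both B and C (A is the plurality loser of p2). -/
theorem stmt3 (p : Profile) (hp : p.nonneg)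
    (h1 : p.Z < p.X) (h2 : p.Z < p.Y) (h3 : p.Y + p.z2 < p.X + p.z1)
    (hc1 : p.Y > p.X) (hc2 : p.Y > -p.x1 + p.x2 + p.Z) :
    ∃ p1 p2 : Profile, p1.nonneg ∧ p2.nonneg ∧ p1 + p2 = p ∧
      wins Cand.B p1 ∧ wins Cand.B p2 ∧
      p1.Y > p1.V / 2 ∧
      (p2.X < p2.Y ∧ p2.X < p2.Z) := by

  obtain ⟨hx1, hx2, hy1, hy2, hz1, hz2⟩ := hp
  simp only [Profile.X, Profile.Y, Profile.Z] at h1 h2 h3 hc1 hc2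
  have hZpos : 0 < p.z1 + p.z2 := by linarith
  set t : ℝ := max 0 (p.z1 + p.z2 - (p.y1 + p.y2 - (p.x1 + p.x2)) / 2) with ht
  set a : ℝ := min p.x1 t with ha
  have ha0 : 0 ≤ a := le_min hx1 (le_max_left _ _)
  have hax1 : a ≤ p.x1 := min_le_left _ _
  have haZ : a < p.z1 + p.z2 := by
    have htZ : t < p.z1 + p.z2 := max_lt hZpos (by linarith)
    exact lt_of_le_of_lt (min_le_right _ _) htZ
  have hkey : p.z1 + p.z2 - 2 * a < p.y1 + p.y2 - (p.x1 + p.x2) := by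
    rcases min_cases p.x1 t with ⟨hmin, _⟩ | ⟨hmin, _⟩
    · rw [ha, hmin]; linarith
    · rw [ha, hmin, ht]
      rcases max_cases (0 : ℝ) (p.z1 + p.z2 - (p.y1 + p.y2 - (p.x1 + p.x2)) / 2) with
        ⟨hm, hm2⟩ | ⟨hm, _⟩
      · rw [hm]; linarith
      · rw [hm]; linarith
  set lo : ℝ := max a (p.z1 + p.z2 - a) with hlo
  set b : ℝ := (lo + (p.y1 + p.y2 - (p.x1 + p.x2) + a)) / 2 with hb
  have hlo1 : a ≤ lo := le_max_left _ _
  have hlo2 : p.z1 + p.z2 - a ≤ lo := le_max_right _ _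
  have hloub : lo < p.y1 + p.y2 - (p.x1 + p.x2) + a :=
    max_lt (by linarith) (by linarith)
  have hab : a < b := by rw [hb]; linarith
  have hZab : p.z1 + p.z2 - a < b := by rw [hb]; linarith
  have hbub : b < p.y1 + p.y2 - (p.x1 + p.x2) + a := by rw [hb]; linarith
  have hb0 : 0 ≤ b := le_of_lt (lt_of_le_of_lt ha0 hab)
  have hbY : b ≤ p.y1 + p.y2 := by linarith
  set b1 : ℝ := min b p.y1 with hb1
  set b2 : ℝ := b - b1 with hb2
  have hb10 : 0 ≤ b1 := le_min hb0 hy1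
  have hb1y : b1 ≤ p.y1 := min_le_right _ _
  have hb1b : b1 ≤ b := min_le_left _ _
  have hb20 : 0 ≤ b2 := by rw [hb2]; linarith
  have hb2y : b2 ≤ p.y2 := by
    rw [hb2]
    have : b - p.y2 ≤ b1 := le_min (by linarith) (by linarith)
    linarith
  refine ⟨⟨p.x1 - a, p.x2, p.y1 - b1, p.y2 - b2, 0, 0⟩,
          ⟨a, 0, b1, b2, p.z1, p.z2⟩, ?_, ?_, ?_, ?_, ?_, ?_, ?_, ?_⟩
  · exact ⟨show (0:ℝ) ≤ p.x1 - a by linarith, hx2,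
      show (0:ℝ) ≤ p.y1 - b1 by linarith,
      show (0:ℝ) ≤ p.y2 - b2 by linarith, le_refl _, le_refl _⟩
  · exact ⟨ha0, le_refl _, hb10, hb20, hz1, hz2⟩
  · show Profile.mk _ _ _ _ _ _ = p
    have hpeta : p = ⟨p.x1, p.x2, p.y1, p.y2, p.z1, p.z2⟩ := rfl
    rw [hpeta]
    simp only [Profile.mk.injEq]
    refine ⟨by ring, by ring, by ring, by ring, by ring, by ring⟩
  · left
    simp only [Profile.X, Profile.Y, Profile.Z]
    have : b1 + b2 = b := by rw [hb2]; ring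
    linarith
  · right; right
    simp only [Profile.X, Profile.Y, Profile.Z]
    have : b1 + b2 = b := by rw [hb2]; ring
    refine ⟨by linarith, by linarith, by linarith⟩
  · simp only [Profile.X, Profile.Y, Profile.Z, Profile.V]
    have : b1 + b2 = b := by rw [hb2]; ring
    linarith
  · simp only [Profile.X, Profile.Y, Profile.Z]
    have : b1 + b2 = b := by rw [hb2]; ring
    linarith
  · simp only [Profile.X, Profile.Y, Profile.Z]
    linarith
end

section
/- (Claim from the proof of Proposition 1, plurality loser case.) Let p be a three-candidate complete-ballot profile satisfying the background assumptions Z < X, Z < Y, and Y + Z2 < X + Z1, and suppose p = p1 + p2 is a partition such that C wins strictly in both p1 and p2. Then C does not have a strict majority of first-place votes in either sub-election: for i = 1, 2, the first-place total of C in p_i does not strictly exceed the sum of the first-place totals of A and B in p_i. -/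
theorem stmt4 (p p1 p2 : Profile) (hp : p.nonneg)
    (h1 : p.Z < p.X) (h2 : p.Z < p.Y) (h3 : p.Y + p.z2 < p.X + p.z1)
    (hn1 : p1.nonneg) (hn2 : p2.nonneg) (hpart : p1 + p2 = p)
    (hw1 : wins Cand.C p1) (hw2 : wins Cand.C p2) :
    ¬ (p1.Z > p1.X + p1.Y) ∧ ¬ (p2.Z > p2.X + p2.Y) := by
  subst hpart
  obtain ⟨a1,a2,a3,a4,a5,a6⟩ := hn1
  obtain ⟨b1,b2,b3,b4,b5,b6⟩ := hn2
  have e : ∀ q r : Profile, q + r = ⟨q.x1+r.x1, q.x2+r.x2, q.y1+r.y1, q.y2+r.y2, q.z1+r.z1, q.z2+r.z2⟩ := fun _ _ => rfl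
  simp only [wins, Profile.X, Profile.Y, Profile.Z, e] at *
  constructor <;> intro h
  · rcases hw2 with h' | ⟨_,_,h'⟩ | ⟨_,_,h'⟩ <;> linarith
  · rcases hw1 with h' | ⟨_,_,h'⟩ | ⟨_,_,h'⟩ <;> linarith
end

section
/- (Claim from the proof of Proposition 1.) Let p be a three-candidate complete-ballot profile satisfying the background assumptions Z < X, Z < Y, and Y + Z2 < X + Z1, and suppose p = p1 + p2 is a partition such that C wins strictly in both p1 and p2. Then the candidates eliminated in the two sub-elections differ: in exactly one of p1, p2 candidate A's first-place total is strictly smaller than the first-place totals of both B and C, and in the other candidate B's first-place total is strictly smaller than the first-place totals of both A and C. -/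
theorem stmt5 (p p1 p2 : Profile) (hp : p.nonneg)
    (h1 : p.Z < p.X) (h2 : p.Z < p.Y) (h3 : p.Y + p.z2 < p.X + p.z1)
    (hn1 : p1.nonneg) (hn2 : p2.nonneg) (hpart : p1 + p2 = p)
    (hw1 : wins Cand.C p1) (hw2 : wins Cand.C p2) :
    ((p1.X < p1.Y ∧ p1.X < p1.Z) ∧ (p2.Y < p2.X ∧ p2.Y < p2.Z)) ∨
    ((p2.X < p2.Y ∧ p2.X < p2.Z) ∧ (p1.Y < p1.X ∧ p1.Y < p1.Z)) := by
  obtain ⟨a1,a2,a3,a4,a5,a6⟩ := hn1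
  obtain ⟨b1,b2,b3,b4,b5,b6⟩ := hn2
  have e1 : p1.x1 + p2.x1 = p.x1 := congrArg Profile.x1 hpart
  have e2 : p1.x2 + p2.x2 = p.x2 := congrArg Profile.x2 hpart
  have e3 : p1.y1 + p2.y1 = p.y1 := congrArg Profile.y1 hpart
  have e4 : p1.y2 + p2.y2 = p.y2 := congrArg Profile.y2 hpart
  have e5 : p1.z1 + p2.z1 = p.z1 := congrArg Profile.z1 hpart
  have e6 : p1.z2 + p2.z2 = p.z2 := congrArg Profile.z2 hpart
  simp only [wins, Profile.X, Profile.Y, Profile.Z] at *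
  rcases hw1 with h | ⟨ha1, ha2, ha3⟩ | ⟨hb1, hb2, hb3⟩ <;>
    rcases hw2 with h' | ⟨hc1, hc2, hc3⟩ | ⟨hd1, hd2, hd3⟩
  · exfalso; linarith
  · exfalso; linarith
  · exfalso; linarith
  · exfalso; linarith
  · exfalso; linarith
  · exact Or.inl ⟨⟨ha2, ha1⟩, ⟨hd2, hd1⟩⟩
  · exfalso; linarith
  · exact Or.inr ⟨⟨hc2, hc1⟩, ⟨hb2, hb1⟩⟩
  · exfalso; linarith
end

section
/- (Proposition 3.) For every ε > 0 there exists a three-candidate complete-ballot profile p with total vote V = 1 satisfying the background assumptions Z < X, Z < Y, and Y + Z2 < X + Z1, such that the plurality loser C's first-place total satisfies Z < ε and p demonstrates a reinforcement paradox for the runner-up B. In particular, the plurality loser can have arbitrarily small first-place support while the election demonstrates a reinforcement paradox. -/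
lemma Profile.add_def (p q : Profile) :
    p + q = ⟨p.x1 + q.x1, p.x2 + q.x2, p.y1 + q.y1, p.y2 + q.y2, p.z1 + q.z1, p.z2 + q.z2⟩ :=
  rfl

theorem stmt9 :
    ∀ ε : ℝ, ε > 0 →
      ∃ p : Profile, p.nonneg ∧ p.V = 1 ∧
        p.Z < p.X ∧ p.Z < p.Y ∧ p.Y + p.z2 < p.X + p.z1 ∧
        p.Z < ε ∧ paradox Cand.B p := by
  intro ε hε
  obtain ⟨M, hM2, hMε⟩ : ∃ M : ℝ, 2 ≤ M ∧ 3 / ε ≤ M :=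
    ⟨max 2 (3 / ε), le_max_left _ _, le_max_right _ _⟩
  have hden : (0:ℝ) < 2 * M + 6.5 := by nlinarith
  set t : ℝ := 1 / (2 * M + 6.5) with ht
  have htpos : 0 < t := by positivity
  have htV : (2 * M + 6.5) * t = 1 := by
    rw [ht]; field_simp
  have h1 : 3 ≤ ε * M := by
    have := (div_le_iff₀ hε).mp hMε; nlinarith
  have hZε : 3 * t < ε := by
    have h2 : ε * ((2 * M + 6.5) * t) = ε := by rw [htV, mul_one]
    nlinarith [mul_le_mul_of_nonneg_left h1 htpos.le, mul_pos hε htpos]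
  refine ⟨⟨(M + 1.5) * t, 0, (M + 2) * t, 0, 2 * t, t⟩, ?_, ?_, ?_, ?_, ?_, ?_, ?_⟩
  · refine ⟨by nlinarith, le_refl 0, by nlinarith, le_refl 0, by nlinarith, htpos.le⟩
  · show ((M + 1.5) * t + 0) + ((M + 2) * t + 0) + (2 * t + t) = 1
    nlinarith
  · show 2 * t + t < (M + 1.5) * t + 0
    nlinarith
  · show 2 * t + t < (M + 2) * t + 0
    nlinarith
  · show ((M + 2) * t + 0) + t < ((M + 1.5) * t + 0) + 2 * t
    nlinarith
  · show 2 * t + t < ε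
    nlinarith
  · refine ⟨⟨(M + 0.5) * t, 0, M * t, 0, 0, t⟩, ⟨t, 0, 2 * t, 0, 2 * t, 0⟩,
      ⟨by nlinarith, le_refl 0, by nlinarith, le_refl 0, le_refl 0, htpos.le⟩,
      ⟨htpos.le, le_refl 0, (by positivity : (0:ℝ) ≤ 2 * t), le_refl 0, (by positivity : (0:ℝ) ≤ 2 * t), le_refl 0⟩,
      ?_, ?_, ?_, ?_⟩
    · rw [Profile.add_def]
      simp only [Profile.mk.injEq]
      refine ⟨by ring, by ring, by ring, by ring, by ring, by ring⟩
    · -- wins B p1 : second disjunct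
      right; left
      refine ⟨?_, ?_, ?_⟩ <;>
        simp only [wins, Profile.X, Profile.Y, Profile.Z] <;> nlinarith
    · -- wins B p2 : third disjunct
      right; right
      refine ⟨?_, ?_, ?_⟩ <;>
        simp only [wins, Profile.X, Profile.Y, Profile.Z] <;> nlinarith
    · -- not wins B p
      simp only [wins, Profile.X, Profile.Y, Profile.Z]
      rintro (h | ⟨h1', h2', h3'⟩ | ⟨h1', h2', h3'⟩) <;> nlinarith
end

section
/- (Proposition 4, runner-up lower bound.) Let p be a three-candidate complete-ballot profile satisfying the background assumptions Z < X, Z < Y, and Y + Z2 < X + Z1, and suppose p demonstrates a reinforcement paradox for the runner-up B. Then the runner-up's first-place total satisfies Y > V/4, i.e., B receives strictly more than 25% of the first-place votes. -/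
lemma winB_quarter (q : Profile) (hq : q.nonneg) (hw : wins Cand.B q) :
    q.Y > q.V / 4 := by
  obtain ⟨h1, h2, h3, h4, h5, h6⟩ := hq
  simp only [wins] at hw
  unfold Profile.V Profile.X Profile.Y Profile.Z at *
  rcases hw with h | ⟨ha, hb, hc⟩ | ⟨ha, hb, hc⟩ <;> linarith

theorem stmt10 (p : Profile) (hp : p.nonneg)
    (h1 : p.Z < p.X) (h2 : p.Z < p.Y) (h3 : p.Y + p.z2 < p.X + p.z1)
    (hpar : paradox Cand.B p) :
    p.Y > p.V / 4 := by
  obtain ⟨p1, p2, hn1, hn2, heq, hw1, hw2, _⟩ := hpar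
  have h1 := winB_quarter p1 hn1 hw1
  have h2 := winB_quarter p2 hn2 hw2
  have hx : p1.x1 + p2.x1 = p.x1 ∧ p1.x2 + p2.x2 = p.x2 ∧ p1.y1 + p2.y1 = p.y1 ∧
      p1.y2 + p2.y2 = p.y2 ∧ p1.z1 + p2.z1 = p.z1 ∧ p1.z2 + p2.z2 = p.z2 := by
    refine ⟨?_, ?_, ?_, ?_, ?_, ?_⟩ <;> rw [← heq] <;> rfl
  obtain ⟨e1, e2, e3, e4, e5, e6⟩ := hx
  unfold Profile.V Profile.X Profile.Y Profile.Z at *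
  linarith
end

section
/- (Proposition 4, plurality loser lower bound.) Let p be a three-candidate complete-ballot profile satisfying the background assumptions Z < X, Z < Y, and Y + Z2 < X + Z1, and suppose p demonstrates a reinforcement paradox for the plurality loser C. Then the plurality loser's first-place total satisfies Z > V/4, i.e., C receives strictly more than 25% of the first-place votes. -/
lemma winC_quarter (q : Profile) (hq : q.nonneg) (hw : wins Cand.C q) :
    q.Z > q.V / 4 := by
  obtain ⟨h1, h2, h3, h4, h5, h6⟩ := hq
  simp only [wins, Profile.Z, Profile.V, Profile.X, Profile.Y] at *
  rcases hw with h | ⟨a, b, c⟩ | ⟨a, b, c⟩ <;> linarith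

theorem stmt11 (p : Profile) (hp : p.nonneg)
    (h1 : p.Z < p.X) (h2 : p.Z < p.Y) (h3 : p.Y + p.z2 < p.X + p.z1)
    (hpar : paradox Cand.C p) :
    p.Z > p.V / 4 := by
  obtain ⟨p1, p2, hn1, hn2, hadd, hw1, hw2, -⟩ := hpar
  have k1 := winC_quarter p1 hn1 hw1
  have k2 := winC_quarter p2 hn2 hw2
  subst hadd
  have e1 : (p1 + p2).x1 = p1.x1 + p2.x1 := rfl
  have e2 : (p1 + p2).x2 = p1.x2 + p2.x2 := rfl
  have e3 : (p1 + p2).y1 = p1.y1 + p2.y1 := rfl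
  have e4 : (p1 + p2).y2 = p1.y2 + p2.y2 := rfl
  have e5 : (p1 + p2).z1 = p1.z1 + p2.z1 := rfl
  have e6 : (p1 + p2).z2 = p1.z2 + p2.z2 := rfl
  simp only [Profile.Z, Profile.V, Profile.X, Profile.Y, e1, e2, e3, e4, e5, e6] at *
  linarith
end

section
/- (Proposition 4, tightness for the runner-up.) For every ε > 0 there exists a three-candidate complete-ballot profile p with total vote V = 1 satisfying the background assumptions Z < X, Z < Y, and Y + Z2 < X + Z1, that demonstrates a reinforcement paradox for the runner-up B, and such that Y < 1/4 + ε and X > 1/2 − ε. In other words, in the limit the runner-up can have as little as 25% of the first-place vote and the IRV winner as much as 50% while the election demonstrates a runner-up reinforcement paradox. -/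
theorem stmt12 :
    ∀ ε : ℝ, ε > 0 →
      ∃ p : Profile, p.nonneg ∧ p.V = 1 ∧
        p.Z < p.X ∧ p.Z < p.Y ∧ p.Y + p.z2 < p.X + p.z1 ∧
        paradox Cand.B p ∧
        p.Y < 1 / 4 + ε ∧ p.X > 1 / 2 - ε := by

  intro ε hε
  set t : ℝ := min ε 1 / 200 with ht
  have ht0 : 0 < t := by positivity
  have ht1 : t ≤ 1/200 := by
    have := min_le_right ε 1
    rw [ht]; linarith
  have htε : 200 * t ≤ ε := by
    have := min_le_left ε 1
    rw [ht]; linarith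
  refine ⟨⟨1/2 - 7*t/4, 0, 1/4 + t, 0, 2*t, 1/4 - 5*t/4⟩, ?_, ?_, ?_, ?_, ?_, ?_, ?_, ?_⟩
  · refine ⟨by linarith, le_refl 0, by linarith, le_refl 0, by linarith, by linarith⟩
  · simp only [Profile.V, Profile.X, Profile.Y, Profile.Z]; ring
  · simp only [Profile.X, Profile.Z]; linarith
  · simp only [Profile.Y, Profile.Z]; linarith
  · simp only [Profile.X, Profile.Y]; linarith
  · refine ⟨⟨1/2 - 11*t/4, 0, 1/4 - t, 0, 0, 1/4 - 5*t/4⟩,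
      ⟨t, 0, 2*t, 0, 2*t, 0⟩, ?_, ?_, ?_, ?_, ?_, ?_⟩
    · exact ⟨by dsimp only; linarith, le_refl 0, by dsimp only; linarith, le_refl 0, le_refl 0, by dsimp only; linarith⟩
    · exact ⟨by dsimp only; linarith, le_refl 0, by dsimp only; linarith, le_refl 0, by dsimp only; linarith, le_refl 0⟩
    · show Profile.mk _ _ _ _ _ _ = _
      simp only [Profile.mk.injEq]
      refine ⟨by ring, by ring, by ring, by ring, by ring, by ring⟩
    · right; left
      simp only [Profile.X, Profile.Y, Profile.Z]
      refine ⟨by linarith, by linarith, by linarith⟩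
    · right; right
      simp only [Profile.X, Profile.Y, Profile.Z]
      refine ⟨by linarith, by linarith, by linarith⟩
    · rintro (h | ⟨h1, h2, h3⟩ | ⟨h1, h2, h3⟩) <;>
        simp only [Profile.X, Profile.Y, Profile.Z] at * <;> linarith
  · simp only [Profile.Y]; linarith
  · simp only [Profile.X]; linarith
end

section
/- (Proposition 4, tightness for the plurality loser.) For every ε > 0 there exists a three-candidate complete-ballot profile p with total vote V = 1 satisfying the background assumptions Z < X, Z < Y, and Y + Z2 < X + Z1, that demonstrates a reinforcement paradox for the plurality loser C, and such that Z < 1/4 + ε. In other words, in the limit the plurality loser can have as little as 25% of the first-place vote while the election demonstrates a plurality loser reinforcement paradox. -/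
theorem stmt13 :
    ∀ ε : ℝ, ε > 0 →
      ∃ p : Profile, p.nonneg ∧ p.V = 1 ∧
        p.Z < p.X ∧ p.Z < p.Y ∧ p.Y + p.z2 < p.X + p.z1 ∧
        paradox Cand.C p ∧
        p.Z < 1 / 4 + ε := by
  intro ε hε
  set δ : ℝ := min ε 1 / 100 with hδdef
  have hδ0 : 0 < δ := by positivity
  have hδ1 : δ ≤ 1 / 100 := by
    have : min ε 1 ≤ 1 := min_le_right _ _
    simp only [hδdef]; linarith
  have hδε : 2 * δ < ε := by
    have : min ε 1 ≤ ε := min_le_left _ _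
    simp only [hδdef]; linarith
  refine ⟨⟨1/4 - δ, 1/8, 1/4 - δ, 1/8, 1/4 + 2*δ, 0⟩, ?_, ?_, ?_, ?_, ?_, ?_, ?_⟩
  · refine ⟨by linarith, by norm_num, by linarith, by norm_num, by linarith, le_refl 0⟩
  · simp only [Profile.V, Profile.X, Profile.Y, Profile.Z]; ring
  · simp only [Profile.X, Profile.Z]; linarith
  · simp only [Profile.Y, Profile.Z]; linarith
  · simp only [Profile.X, Profile.Y]; linarith
  · refine ⟨⟨0, 1/8, 1/4 - δ, 0, 1/8 + δ, 0⟩, ⟨1/4 - δ, 0, 0, 1/8, 1/8 + δ, 0⟩, ?_, ?_, ?_, ?_, ?_, ?_⟩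
    · exact ⟨le_refl 0, by norm_num, by linarith, le_refl 0, by linarith, le_refl 0⟩
    · exact ⟨by linarith, le_refl 0, le_refl 0, by norm_num, by linarith, le_refl 0⟩
    · show Profile.mk (0 + (1/4 - δ)) (1/8 + 0) (1/4 - δ + 0) (0 + 1/8)
          (1/8 + δ + (1/8 + δ)) (0 + 0) = _
      simp only [Profile.mk.injEq]
      refine ⟨by ring, by ring, by ring, by ring, by ring, by ring⟩
    · refine Or.inr (Or.inl ⟨?_, ?_, ?_⟩) <;>
        simp only [Profile.X, Profile.Y, Profile.Z] <;> linarith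
    · refine Or.inr (Or.inr ⟨?_, ?_, ?_⟩) <;>
        simp only [Profile.X, Profile.Y, Profile.Z] <;> linarith
    · intro h
      rcases h with h | ⟨h, -⟩ | ⟨h, -⟩ <;>
        simp only [Profile.X, Profile.Y, Profile.Z] at h <;> linarith
  · show (1:ℝ)/4 + 2*δ + 0 < 1/4 + ε
    linarith
end

section
/- (IAC probability of no majority candidate, complete ballots.) The IAC probability, over complete-ballot profiles with total 1, of the event that no candidate has a strict majority of first-place votes — i.e., ¬(X > Y + Z), ¬(Y > X + Z), and ¬(Z > X + Y) — equals 7/16. Equivalently, the 5-dimensional Lebesgue measure of the set of points of T on which this event holds equals (7/16)·(1/120). -/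
/-- The simplex of complete-ballot profiles with total 1, parameterized by the
first five coordinates (X1, X2, Y1, Y2, Z1). -/
def T : Set (Fin 5 → ℝ) :=
  {v | (∀ i, 0 ≤ v i) ∧ v 0 + v 1 + v 2 + v 3 + v 4 ≤ 1}

/-- The profile with total 1 associated to a point of `T`, with
`Z2 = 1 - (X1 + X2 + Y1 + Y2 + Z1)`. -/
noncomputable def profOf (v : Fin 5 → ℝ) : Profile :=
  ⟨v 0, v 1, v 2, v 3, v 4, 1 - (v 0 + v 1 + v 2 + v 3 + v 4)⟩

/-- First-place total of a candidate. -/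
def fp : Cand → Profile → ℝ
  | Cand.A, p => p.X
  | Cand.B, p => p.Y
  | Cand.C, p => p.Z

/-- Candidate `W`'s first-place total is strictly smallest among the three. -/
def strictlySmallest (W : Cand) (p : Profile) : Prop :=
  ∀ W' : Cand, W' ≠ W → fp W p < fp W' p

open MeasureTheory Set

lemma msum {n : ℕ} : Measurable (fun u : Fin n → ℝ => ∑ i, u i) :=
  Finset.measurable_sum _ fun i _ => measurable_pi_apply i

lemma oneDim (k : ℕ) (r : ℝ) (hr : 0 ≤ r) :
    ∫⁻ x : ℝ, Set.indicator (Set.Icc 0 r)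
        (fun x => ENNReal.ofReal ((r - x) ^ k / k.factorial)) x
      = ENNReal.ofReal (r ^ (k + 1) / (k + 1).factorial) := by
  rw [lintegral_indicator measurableSet_Icc]
  rw [← MeasureTheory.ofReal_integral_eq_lintegral_ofReal]
  · congr 1
    rw [MeasureTheory.integral_Icc_eq_integral_Ioc, ← intervalIntegral.integral_of_le hr]
    have h1 : (∫ x in (0:ℝ)..r, (r - x) ^ k / k.factorial)
        = (∫ x in (0:ℝ)..r, (r - x) ^ k) / k.factorial := intervalIntegral.integral_div _ _
    rw [h1, intervalIntegral.integral_comp_sub_left (fun x => x ^ k) r]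
    simp only [sub_self, sub_zero, integral_pow]
    have hk : (k.factorial : ℝ) ≠ 0 := by
      exact_mod_cast k.factorial_pos.ne'
    have hk1 : ((k:ℝ) + 1) ≠ 0 := by positivity
    rw [Nat.factorial_succ]
    push_cast
    field_simp
    simp
  · exact Continuous.integrableOn_Icc (by continuity)
  · filter_upwards [ae_restrict_mem measurableSet_Icc] with x hx
    have : 0 ≤ r - x := by linarith [hx.2]
    positivity

lemma peel {n : ℕ} (k : ℕ) (c : ℝ) (P : Set (Fin n → ℝ)) (hP : MeasurableSet P) :
    ∫⁻ v : Fin (n + 1) → ℝ,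
      Set.indicator {v : Fin (n + 1) → ℝ |
          (v ∘ Fin.castSucc) ∈ P ∧ 0 ≤ v (Fin.last n) ∧ ∑ i, v i ≤ c}
        (fun v => ENNReal.ofReal ((c - ∑ i, v i) ^ k / k.factorial)) v
    = ∫⁻ u : Fin n → ℝ,
      Set.indicator {u : Fin n → ℝ | u ∈ P ∧ ∑ i, u i ≤ c}
        (fun u => ENNReal.ofReal ((c - ∑ i, u i) ^ (k + 1) / (k + 1).factorial)) u := by
  have hSm : MeasurableSet {v : Fin (n + 1) → ℝ |
      (v ∘ Fin.castSucc) ∈ P ∧ 0 ≤ v (Fin.last n) ∧ ∑ i, v i ≤ c} := by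
    apply MeasurableSet.inter
    · exact MeasurableSet.preimage hP (by measurability)
    · exact MeasurableSet.inter
        (measurableSet_le measurable_const (measurable_pi_apply _))
        (measurableSet_le msum measurable_const)
  set F : (Fin (n + 1) → ℝ) → ENNReal :=
    Set.indicator {v : Fin (n + 1) → ℝ |
          (v ∘ Fin.castSucc) ∈ P ∧ 0 ≤ v (Fin.last n) ∧ ∑ i, v i ≤ c}
        (fun v => ENNReal.ofReal ((c - ∑ i, v i) ^ k / k.factorial)) with hF
  have hFm : Measurable F := by
    apply Measurable.indicator _ hSm
    apply ENNReal.measurable_ofReal.comp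
    exact (msum.const_sub c).pow_const k |>.div_const _
  have hmp := (volume_preserving_piFinSuccAbove (fun _ : Fin (n+1) => ℝ) (Fin.last n)).symm
  have h1 : ∫⁻ v : Fin (n + 1) → ℝ, F v
      = ∫⁻ p : ℝ × (Fin n → ℝ),
          F ((MeasurableEquiv.piFinSuccAbove (fun _ : Fin (n+1) => ℝ) (Fin.last n)).symm p) :=
    (hmp.lintegral_comp hFm).symm
  rw [h1]
  have hGm : Measurable fun p : ℝ × (Fin n → ℝ) =>
      F ((MeasurableEquiv.piFinSuccAbove (fun _ : Fin (n+1) => ℝ) (Fin.last n)).symm p) :=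
    hFm.comp (MeasurableEquiv.measurable _)
  rw [Measure.volume_eq_prod ℝ (Fin n → ℝ), lintegral_prod_symm' _ hGm]
  apply lintegral_congr
  intro u
  have key : ∀ x : ℝ,
      (MeasurableEquiv.piFinSuccAbove (fun _ : Fin (n+1) => ℝ) (Fin.last n)).symm (x, u)
        = Fin.snoc u x := by
    intro x
    simp [MeasurableEquiv.piFinSuccAbove, Fin.insertNthEquiv, Fin.insertNth_last']
  by_cases hu : u ∈ P ∧ ∑ i, u i ≤ c
  · have hr : (0:ℝ) ≤ c - ∑ i, u i := by linarith [hu.2]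
    have h2 : ∀ x : ℝ, F (Fin.snoc u x)
        = Set.indicator (Set.Icc 0 (c - ∑ i, u i))
            (fun x => ENNReal.ofReal (((c - ∑ i, u i) - x) ^ k / k.factorial)) x := by
      intro x
      have hcomp : (Fin.snoc u x ∘ Fin.castSucc : Fin n → ℝ) = u := by
        funext j; simp [Fin.snoc_castSucc]
      have hsum : ∑ i, Fin.snoc u x i = (∑ i, u i) + x := by
        rw [Fin.sum_univ_castSucc]
        simp [Fin.snoc_castSucc, Fin.snoc_last]
      rw [hF]
      by_cases hx : x ∈ Set.Icc 0 (c - ∑ i, u i)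
      · rw [Set.indicator_of_mem hx, Set.indicator_of_mem]
        · rw [hsum]; ring_nf
        · refine ⟨by rw [hcomp]; exact hu.1, by simp [Fin.snoc_last]; exact hx.1, ?_⟩
          rw [hsum]; linarith [hx.2]
      · rw [Set.indicator_of_notMem hx, Set.indicator_of_notMem]
        intro hmem
        apply hx
        obtain ⟨-, hx0, hxs⟩ := hmem
        rw [Fin.snoc_last] at hx0
        rw [hsum] at hxs
        exact ⟨hx0, by linarith⟩
    calc ∫⁻ x : ℝ, F ((MeasurableEquiv.piFinSuccAbove (fun _ : Fin (n+1) => ℝ) (Fin.last n)).symm (x, u))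
        = ∫⁻ x : ℝ, Set.indicator (Set.Icc 0 (c - ∑ i, u i))
            (fun x => ENNReal.ofReal (((c - ∑ i, u i) - x) ^ k / k.factorial)) x := by
          refine lintegral_congr fun x => ?_
          rw [key x, h2 x]
      _ = ENNReal.ofReal ((c - ∑ i, u i) ^ (k+1) / (k+1).factorial) := oneDim k _ hr
      _ = _ := by
          rw [Set.indicator_of_mem
            (show u ∈ {u : Fin n → ℝ | u ∈ P ∧ ∑ i, u i ≤ c} from hu)]
  · have h2 : ∀ x : ℝ, F (Fin.snoc u x) = 0 := by
      intro x
      rw [hF, Set.indicator_of_notMem]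
      intro hmem
      obtain ⟨hP', hx0, hxs⟩ := hmem
      have hcomp : (Fin.snoc u x ∘ Fin.castSucc : Fin n → ℝ) = u := by
        funext j; simp [Fin.snoc_castSucc]
      have hsum : ∑ i, Fin.snoc u x i = (∑ i, u i) + x := by
        rw [Fin.sum_univ_castSucc]; simp [Fin.snoc_castSucc, Fin.snoc_last]
      rw [Fin.snoc_last] at hx0
      rw [hsum] at hxs
      rw [hcomp] at hP'
      exact hu ⟨hP', by linarith⟩
    rw [Set.indicator_of_notMem
      (show u ∉ {u : Fin n → ℝ | u ∈ P ∧ ∑ i, u i ≤ c} from hu) _]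
    calc ∫⁻ x : ℝ, F ((MeasurableEquiv.piFinSuccAbove (fun _ : Fin (n+1) => ℝ) (Fin.last n)).symm (x, u))
        = ∫⁻ x : ℝ, (0:ENNReal) := lintegral_congr fun x => by rw [key x, h2 x]
      _ = 0 := lintegral_zero

lemma nonnegSet_measurable {n : ℕ} : MeasurableSet {u : Fin n → ℝ | ∀ i, 0 ≤ u i} := by
  have : {u : Fin n → ℝ | ∀ i, 0 ≤ u i} = ⋂ i, {u | 0 ≤ u i} := by
    ext u; simp
  rw [this]
  exact MeasurableSet.iInter fun i =>
    measurableSet_le measurable_const (measurable_pi_apply i)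

lemma split_nonneg {n : ℕ} (v : Fin (n+1) → ℝ) :
    (∀ i, 0 ≤ v i) ↔ ((v ∘ Fin.castSucc) ∈ {u : Fin n → ℝ | ∀ i, 0 ≤ u i} ∧ 0 ≤ v (Fin.last n)) := by
  rw [Fin.forall_iff_castSucc]
  exact ⟨fun h => ⟨fun j => h.2 j, h.1⟩, fun h => ⟨h.2, fun j => h.1 j⟩⟩

lemma corner (n : ℕ) : ∀ (k : ℕ) (c : ℝ), 0 ≤ c →
    ∫⁻ u : Fin n → ℝ,
      Set.indicator {u : Fin n → ℝ | (∀ i, 0 ≤ u i) ∧ ∑ i, u i ≤ c}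
        (fun u => ENNReal.ofReal ((c - ∑ i, u i) ^ k / k.factorial)) u
    = ENNReal.ofReal (c ^ (n + k) / (n + k).factorial) := by
  induction n with
  | zero =>
    intro k c hc
    have hset : {u : Fin 0 → ℝ | (∀ i, 0 ≤ u i) ∧ ∑ i, u i ≤ c} = Set.univ := by
      ext u
      simp only [Set.mem_setOf_eq, Set.mem_univ, iff_true]
      exact ⟨fun i => i.elim0, by simpa using hc⟩
    rw [hset, Set.indicator_univ]
    have hsum : ∀ u : Fin 0 → ℝ, ∑ i, u i = 0 := fun u => by simp
    calc ∫⁻ u : Fin 0 → ℝ, ENNReal.ofReal ((c - ∑ i, u i) ^ k / k.factorial)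
        = ∫⁻ _ : Fin 0 → ℝ, ENNReal.ofReal (c ^ k / k.factorial) :=
          lintegral_congr fun u => by rw [hsum u, sub_zero]
      _ = ENNReal.ofReal (c ^ k / k.factorial) * volume (Set.univ : Set (Fin 0 → ℝ)) :=
          lintegral_const _
      _ = ENNReal.ofReal (c ^ (0 + k) / (0 + k).factorial) := by
          simp [MeasureTheory.volume_pi, Measure.pi_univ]
  | succ n ih =>
    intro k c hc
    have hset : {v : Fin (n+1) → ℝ | (∀ i, 0 ≤ v i) ∧ ∑ i, v i ≤ c}
        = {v : Fin (n+1) → ℝ | (v ∘ Fin.castSucc) ∈ {u : Fin n → ℝ | ∀ i, 0 ≤ u i}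
            ∧ 0 ≤ v (Fin.last n) ∧ ∑ i, v i ≤ c} := by
      ext v
      simp only [Set.mem_setOf_eq]
      rw [split_nonneg v]
      tauto
    rw [hset, peel k c _ nonnegSet_measurable]
    have := ih (k + 1) c hc
    rw [show n + (k + 1) = n + 1 + k by omega] at this
    exact this

lemma wgt_zero (c : ℝ) {n : ℕ} (S : Set (Fin n → ℝ)) (hS : MeasurableSet S) :
    volume S = ∫⁻ u : Fin n → ℝ,
      Set.indicator S (fun u => ENNReal.ofReal ((c - ∑ i, u i) ^ 0 / Nat.factorial 0)) u := by
  rw [← lintegral_indicator_one hS]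
  refine lintegral_congr fun u => ?_
  by_cases hu : u ∈ S
  · rw [Set.indicator_of_mem hu, Set.indicator_of_mem hu]
    simp
  · rw [Set.indicator_of_notMem hu, Set.indicator_of_notMem hu]

lemma volume_corner {n : ℕ} (c : ℝ) (hc : 0 ≤ c) :
    volume {u : Fin n → ℝ | (∀ i, 0 ≤ u i) ∧ ∑ i, u i ≤ c}
      = ENNReal.ofReal (c ^ n / n.factorial) := by
  have hS : MeasurableSet {u : Fin n → ℝ | (∀ i, 0 ≤ u i) ∧ ∑ i, u i ≤ c} :=
    nonnegSet_measurable.inter (measurableSet_le msum measurable_const)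
  rw [wgt_zero c _ hS, corner n 0 c hc]
  norm_num

lemma meas_aux2 {n : ℕ} (f g : (Fin n → ℝ) → ℝ) (hf : Measurable f) (hg : Measurable g) :
    MeasurableSet {u : Fin n → ℝ | f u ≤ g u} := measurableSet_le hf hg

lemma wgt_meas {n : ℕ} (c : ℝ) (k : ℕ) :
    Measurable (fun u : Fin n → ℝ => ENNReal.ofReal ((c - ∑ i, u i) ^ k / k.factorial)) :=
  ENNReal.measurable_ofReal.comp ((msum.const_sub c).pow_const k |>.div_const _)

lemma lint_cmul {n : ℕ} (S : Set (Fin n → ℝ)) (hS : MeasurableSet S) (a : ENNReal)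
    (h : (Fin n → ℝ) → ENNReal) (hh : Measurable h) :
    ∫⁻ u, Set.indicator S (fun u => a * h u) u = a * ∫⁻ u, Set.indicator S h u := by
  have he : (Set.indicator S fun u => a * h u) = fun u => a * Set.indicator S h u :=
    funext fun u => by by_cases hu : u ∈ S <;> simp [hu]
  rw [he, lintegral_const_mul a (hh.indicator hS)]

lemma V1val :
    volume {v : Fin 5 → ℝ | (∀ i, 0 ≤ v i) ∧ (v 0 + v 1 ≤ 1/2 ∧ ∑ i, v i ≤ 1)}
      = ENNReal.ofReal (13/1920) := by
  have h01 : ∀ m : ℕ, Measurable (fun u : Fin (m+2) → ℝ => u 0 + u 1) := fun m =>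
    (measurable_pi_apply 0).add (measurable_pi_apply 1)
  have hP4 : MeasurableSet {u : Fin 4 → ℝ | (∀ i, 0 ≤ u i) ∧ u 0 + u 1 ≤ 1/2} :=
    nonnegSet_measurable.inter (measurableSet_le (h01 2) measurable_const)
  have hP3 : MeasurableSet {u : Fin 3 → ℝ | (∀ i, 0 ≤ u i) ∧ u 0 + u 1 ≤ 1/2} :=
    nonnegSet_measurable.inter (measurableSet_le (h01 1) measurable_const)
  have hP2 : MeasurableSet {u : Fin 2 → ℝ | (∀ i, 0 ≤ u i) ∧ u 0 + u 1 ≤ 1/2} :=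
    nonnegSet_measurable.inter (measurableSet_le (h01 0) measurable_const)
  have hS5 : MeasurableSet {v : Fin 5 → ℝ | (∀ i, 0 ≤ v i) ∧ (v 0 + v 1 ≤ 1/2 ∧ ∑ i, v i ≤ 1)} :=
    nonnegSet_measurable.inter ((measurableSet_le (h01 3) measurable_const).inter
      (measurableSet_le msum measurable_const))
  rw [wgt_zero 1 _ hS5]
  have hset5 : {v : Fin 5 → ℝ | (∀ i, 0 ≤ v i) ∧ (v 0 + v 1 ≤ 1/2 ∧ ∑ i, v i ≤ 1)}
      = {v : Fin 5 → ℝ | (v ∘ Fin.castSucc) ∈ {u : Fin 4 → ℝ | (∀ i, 0 ≤ u i) ∧ u 0 + u 1 ≤ 1/2}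
          ∧ 0 ≤ v (Fin.last 4) ∧ ∑ i, v i ≤ 1} := by
    ext v
    simp only [Set.mem_setOf_eq, Function.comp_apply]
    rw [split_nonneg v]
    simp only [Set.mem_setOf_eq, Fin.castSucc_zero, Fin.castSucc_one]
    tauto
  rw [hset5, peel 0 1 _ hP4]
  have hset4 : {u : Fin 4 → ℝ | u ∈ {u : Fin 4 → ℝ | (∀ i, 0 ≤ u i) ∧ u 0 + u 1 ≤ 1/2}
        ∧ ∑ i, u i ≤ 1}
      = {v : Fin 4 → ℝ | (v ∘ Fin.castSucc) ∈ {u : Fin 3 → ℝ | (∀ i, 0 ≤ u i) ∧ u 0 + u 1 ≤ 1/2}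
          ∧ 0 ≤ v (Fin.last 3) ∧ ∑ i, v i ≤ 1} := by
    ext v
    simp only [Set.mem_setOf_eq, Function.comp_apply]
    rw [split_nonneg v]
    simp only [Set.mem_setOf_eq, Fin.castSucc_zero, Fin.castSucc_one]
    tauto
  rw [hset4, peel (0+1) 1 _ hP3]
  have hset3 : {u : Fin 3 → ℝ | u ∈ {u : Fin 3 → ℝ | (∀ i, 0 ≤ u i) ∧ u 0 + u 1 ≤ 1/2}
        ∧ ∑ i, u i ≤ 1}
      = {v : Fin 3 → ℝ | (v ∘ Fin.castSucc) ∈ {u : Fin 2 → ℝ | (∀ i, 0 ≤ u i) ∧ u 0 + u 1 ≤ 1/2}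
          ∧ 0 ≤ v (Fin.last 2) ∧ ∑ i, v i ≤ 1} := by
    ext v
    simp only [Set.mem_setOf_eq, Function.comp_apply]
    rw [split_nonneg v]
    simp only [Set.mem_setOf_eq, Fin.castSucc_zero, Fin.castSucc_one]
    tauto
  rw [hset3, peel (0+1+1) 1 _ hP2]
  have hS2h : MeasurableSet {u : Fin 2 → ℝ | (∀ i, 0 ≤ u i) ∧ ∑ i, u i ≤ 1/2} :=
    nonnegSet_measurable.inter (measurableSet_le msum measurable_const)
  have hset2 : {u : Fin 2 → ℝ | u ∈ {u : Fin 2 → ℝ | (∀ i, 0 ≤ u i) ∧ u 0 + u 1 ≤ 1/2}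
        ∧ ∑ i, u i ≤ 1}
      = {u : Fin 2 → ℝ | (∀ i, 0 ≤ u i) ∧ ∑ i, u i ≤ 1/2} := by
    ext u
    simp only [Set.mem_setOf_eq, Fin.sum_univ_two]
    constructor
    · rintro ⟨⟨h1, h2⟩, h3⟩; exact ⟨h1, h2⟩
    · rintro ⟨h1, h2⟩; exact ⟨⟨h1, h2⟩, by linarith⟩
  rw [hset2]
  set S : Set (Fin 2 → ℝ) := {u : Fin 2 → ℝ | (∀ i, 0 ≤ u i) ∧ ∑ i, u i ≤ 1/2} with hSdef
  have hpt : ∀ u : Fin 2 → ℝ,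
      Set.indicator S (fun u => ENNReal.ofReal
        ((1 - ∑ i, u i) ^ (0+1+1+1) / ↑(Nat.factorial (0+1+1+1)))) u
      = Set.indicator S (fun u => ENNReal.ofReal
            ((1/2 - ∑ i, u i) ^ 3 / ↑(Nat.factorial 3))) u
        + Set.indicator S (fun u => ENNReal.ofReal (1/2) * ENNReal.ofReal
            ((1/2 - ∑ i, u i) ^ 2 / ↑(Nat.factorial 2))) u
        + Set.indicator S (fun u => ENNReal.ofReal (1/8) * ENNReal.ofReal
            ((1/2 - ∑ i, u i) ^ 1 / ↑(Nat.factorial 1))) u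
        + Set.indicator S (fun u => ENNReal.ofReal (1/48) * ENNReal.ofReal
            ((1/2 - ∑ i, u i) ^ 0 / ↑(Nat.factorial 0))) u := by
    intro u
    by_cases hu : u ∈ S
    · rw [Set.indicator_of_mem hu, Set.indicator_of_mem hu, Set.indicator_of_mem hu,
        Set.indicator_of_mem hu, Set.indicator_of_mem hu]
      have hh : 0 ≤ 1/2 - ∑ i, u i := by
        have := hu.2; linarith
      rw [← ENNReal.ofReal_mul (by norm_num : (0:ℝ) ≤ 1/2),
        ← ENNReal.ofReal_mul (by norm_num : (0:ℝ) ≤ 1/8),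
        ← ENNReal.ofReal_mul (by norm_num : (0:ℝ) ≤ 1/48),
        ← ENNReal.ofReal_add (by positivity) (by positivity),
        ← ENNReal.ofReal_add (by positivity) (by positivity),
        ← ENNReal.ofReal_add (by positivity) (by positivity)]
      congr 1
      simp only [Nat.factorial]
      push_cast
      ring
    · rw [Set.indicator_of_notMem hu, Set.indicator_of_notMem hu,
        Set.indicator_of_notMem hu, Set.indicator_of_notMem hu,
        Set.indicator_of_notMem hu]
      simp
  rw [lintegral_congr hpt]
  rw [lintegral_add_left (by
      exact ((((wgt_meas (1/2) 3).indicator hS2h).add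
        ((measurable_const.mul (wgt_meas (1/2) 2)).indicator hS2h)).add
        ((measurable_const.mul (wgt_meas (1/2) 1)).indicator hS2h))),
    lintegral_add_left (by
      exact (((wgt_meas (1/2) 3).indicator hS2h).add
        ((measurable_const.mul (wgt_meas (1/2) 2)).indicator hS2h))),
    lintegral_add_left (by exact (wgt_meas (1/2) 3).indicator hS2h)]
  rw [lint_cmul S hS2h _ _ (wgt_meas (1/2) 2), lint_cmul S hS2h _ _ (wgt_meas (1/2) 1),
    lint_cmul S hS2h _ _ (wgt_meas (1/2) 0)]
  have hc : (0:ℝ) ≤ 1/2 := by norm_num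
  rw [hSdef, corner 2 3 (1/2) hc, corner 2 2 (1/2) hc, corner 2 1 (1/2) hc, corner 2 0 (1/2) hc]
  rw [← ENNReal.ofReal_mul (by norm_num : (0:ℝ) ≤ 1/2),
    ← ENNReal.ofReal_mul (by norm_num : (0:ℝ) ≤ 1/8),
    ← ENNReal.ofReal_mul (by norm_num : (0:ℝ) ≤ 1/48),
    ← ENNReal.ofReal_add (by positivity) (by positivity),
    ← ENNReal.ofReal_add (by positivity) (by positivity),
    ← ENNReal.ofReal_add (by positivity) (by positivity)]
  congr 1
  simp [Nat.factorial]
  norm_num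

lemma V3val :
    volume {v : Fin 5 → ℝ | (∀ i, 0 ≤ v i) ∧ (v 0 + v 1 + v 2 + v 3 ≤ 1/2 ∧ ∑ i, v i ≤ 1)}
      = ENNReal.ofReal (3/1920) := by
  have hP4 : MeasurableSet {u : Fin 4 → ℝ | (∀ i, 0 ≤ u i) ∧ ∑ i, u i ≤ 1/2} :=
    nonnegSet_measurable.inter (measurableSet_le msum measurable_const)
  have hS5 : MeasurableSet
      {v : Fin 5 → ℝ | (∀ i, 0 ≤ v i) ∧ (v 0 + v 1 + v 2 + v 3 ≤ 1/2 ∧ ∑ i, v i ≤ 1)} := by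
    refine nonnegSet_measurable.inter (MeasurableSet.inter ?_
      (measurableSet_le msum measurable_const))
    have hq : Measurable (fun v : Fin 5 → ℝ => v 0 + v 1 + v 2 + v 3) :=
      (((measurable_pi_apply (0 : Fin 5)).add (measurable_pi_apply (1 : Fin 5))).add
        (measurable_pi_apply (2 : Fin 5))).add (measurable_pi_apply (3 : Fin 5))
    exact measurableSet_le hq measurable_const
  rw [wgt_zero 1 _ hS5]
  have hcs : ∀ v : Fin 5 → ℝ, ∑ i : Fin 4, (v ∘ Fin.castSucc) i = v 0 + v 1 + v 2 + v 3 := by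
    intro v
    rw [Fin.sum_univ_four]
    rfl
  have hset5 : {v : Fin 5 → ℝ | (∀ i, 0 ≤ v i) ∧ (v 0 + v 1 + v 2 + v 3 ≤ 1/2 ∧ ∑ i, v i ≤ 1)}
      = {v : Fin 5 → ℝ | (v ∘ Fin.castSucc) ∈ {u : Fin 4 → ℝ | (∀ i, 0 ≤ u i) ∧ ∑ i, u i ≤ 1/2}
          ∧ 0 ≤ v (Fin.last 4) ∧ ∑ i, v i ≤ 1} := by
    ext v
    simp only [Set.mem_setOf_eq]
    rw [split_nonneg v, hcs v]
    tauto
  rw [hset5, peel 0 1 _ hP4]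
  have hset4 : {u : Fin 4 → ℝ | u ∈ {u : Fin 4 → ℝ | (∀ i, 0 ≤ u i) ∧ ∑ i, u i ≤ 1/2}
        ∧ ∑ i, u i ≤ 1}
      = {u : Fin 4 → ℝ | (∀ i, 0 ≤ u i) ∧ ∑ i, u i ≤ 1/2} := by
    ext u
    simp only [Set.mem_setOf_eq]
    constructor
    · rintro ⟨⟨h1, h2⟩, h3⟩; exact ⟨h1, h2⟩
    · rintro ⟨h1, h2⟩; exact ⟨⟨h1, h2⟩, by linarith⟩
  rw [hset4]
  set S : Set (Fin 4 → ℝ) := {u : Fin 4 → ℝ | (∀ i, 0 ≤ u i) ∧ ∑ i, u i ≤ 1/2} with hSdef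
  have hpt : ∀ u : Fin 4 → ℝ,
      Set.indicator S (fun u => ENNReal.ofReal
        ((1 - ∑ i, u i) ^ (0+1) / ↑(Nat.factorial (0+1)))) u
      = Set.indicator S (fun u => ENNReal.ofReal
            ((1/2 - ∑ i, u i) ^ 1 / ↑(Nat.factorial 1))) u
        + Set.indicator S (fun u => ENNReal.ofReal (1/2) * ENNReal.ofReal
            ((1/2 - ∑ i, u i) ^ 0 / ↑(Nat.factorial 0))) u := by
    intro u
    by_cases hu : u ∈ S
    · rw [Set.indicator_of_mem hu, Set.indicator_of_mem hu, Set.indicator_of_mem hu]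
      have hh : 0 ≤ 1/2 - ∑ i, u i := by have := hu.2; linarith
      rw [← ENNReal.ofReal_mul (by norm_num : (0:ℝ) ≤ 1/2),
        ← ENNReal.ofReal_add (by positivity) (by positivity)]
      congr 1
      simp only [Nat.factorial]
      push_cast
      ring
    · rw [Set.indicator_of_notMem hu, Set.indicator_of_notMem hu,
        Set.indicator_of_notMem hu]
      simp
  rw [lintegral_congr hpt,
    lintegral_add_left (by exact (wgt_meas (1/2) 1).indicator hP4),
    lint_cmul S hP4 _ _ (wgt_meas (1/2) 0)]
  have hc : (0:ℝ) ≤ 1/2 := by norm_num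
  rw [hSdef, corner 4 1 (1/2) hc, corner 4 0 (1/2) hc,
    ← ENNReal.ofReal_mul (by norm_num : (0:ℝ) ≤ 1/2),
    ← ENNReal.ofReal_add (by positivity) (by positivity)]
  congr 1
  simp [Nat.factorial]
  norm_num

lemma measurable_sum4 : Measurable (fun v : Fin 5 → ℝ => v 0 + v 1 + v 2 + v 3) :=
  (((measurable_pi_apply (0 : Fin 5)).add (measurable_pi_apply (1 : Fin 5))).add
    (measurable_pi_apply (2 : Fin 5))).add (measurable_pi_apply (3 : Fin 5))

lemma hyper_null :
    volume {v : Fin 5 → ℝ | v 0 + v 1 + v 2 + v 3 = 1/2} = 0 := by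
  have hH : MeasurableSet {v : Fin 5 → ℝ | v 0 + v 1 + v 2 + v 3 = 1/2} :=
    measurable_sum4 (measurableSet_singleton (1/2))
  set F : (Fin 5 → ℝ) → ENNReal :=
    Set.indicator {v : Fin 5 → ℝ | v 0 + v 1 + v 2 + v 3 = 1/2} 1 with hF
  have hFm : Measurable F := measurable_one.indicator hH
  rw [← lintegral_indicator_one hH]
  have hmp := (volume_preserving_piFinSuccAbove (fun _ : Fin 5 => ℝ) 0).symm
  rw [show ∫⁻ v, Set.indicator {v : Fin 5 → ℝ | v 0 + v 1 + v 2 + v 3 = 1/2} 1 v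
      = ∫⁻ v, F v from rfl]
  rw [← hmp.lintegral_comp hFm,
    Measure.volume_eq_prod ℝ (Fin 4 → ℝ),
    lintegral_prod_symm'
      (fun p : ℝ × (Fin 4 → ℝ) =>
        F ((MeasurableEquiv.piFinSuccAbove (fun _ : Fin 5 => ℝ) 0).symm p))
      (hFm.comp (MeasurableEquiv.measurable _))]
  have hz : ∀ u : Fin 4 → ℝ,
      (∫⁻ x : ℝ, F ((MeasurableEquiv.piFinSuccAbove (fun _ : Fin 5 => ℝ) 0).symm (x, u))) = 0 := by
    intro u
    have key : ∀ x : ℝ,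
        (MeasurableEquiv.piFinSuccAbove (fun _ : Fin 5 => ℝ) 0).symm (x, u) = Fin.cons x u := by
      intro x
      simp [MeasurableEquiv.piFinSuccAbove, Fin.insertNthEquiv, Fin.insertNth_zero']
    have hpt : ∀ x : ℝ, F (Fin.cons x u)
        = Set.indicator {(1/2 - (u 0 + u 1 + u 2) : ℝ)} 1 x := by
      intro x
      set w : Fin 5 → ℝ := Fin.cons x u with hw
      have hev : w 0 + w 1 + w 2 + w 3 = x + (u 0 + u 1 + u 2) := by
        rw [hw]
        show x + u 0 + u 1 + u 2 = x + (u 0 + u 1 + u 2)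
        ring
      rw [hF]
      by_cases hx : x = 1/2 - (u 0 + u 1 + u 2)
      · have hmem : w ∈ {v : Fin 5 → ℝ | v 0 + v 1 + v 2 + v 3 = 1/2} := by
          simp only [Set.mem_setOf_eq, hev]
          linarith
        rw [Set.indicator_of_mem hmem,
          Set.indicator_of_mem (show x ∈ ({(1/2 - (u 0 + u 1 + u 2) : ℝ)} : Set ℝ) by
            simpa using hx)]
        simp
      · have hmem : w ∉ {v : Fin 5 → ℝ | v 0 + v 1 + v 2 + v 3 = 1/2} := by
          simp only [Set.mem_setOf_eq, hev]
          intro hc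
          exact hx (by linarith)
        rw [Set.indicator_of_notMem hmem,
          Set.indicator_of_notMem (show x ∉ ({(1/2 - (u 0 + u 1 + u 2) : ℝ)} : Set ℝ) by
            simpa using hx)]
    calc (∫⁻ x : ℝ, F ((MeasurableEquiv.piFinSuccAbove (fun _ : Fin 5 => ℝ) 0).symm (x, u)))
        = ∫⁻ x : ℝ, Set.indicator {(1/2 - (u 0 + u 1 + u 2) : ℝ)} 1 x :=
          lintegral_congr fun x => by rw [key x, hpt x]
      _ = volume {(1/2 - (u 0 + u 1 + u 2) : ℝ)} :=
          lintegral_indicator_one (measurableSet_singleton _)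
      _ = 0 := Real.volume_singleton
  calc (∫⁻ u : Fin 4 → ℝ, ∫⁻ x : ℝ,
        F ((MeasurableEquiv.piFinSuccAbove (fun _ : Fin 5 => ℝ) 0).symm (x, u)))
      = ∫⁻ _ : Fin 4 → ℝ, (0 : ENNReal) := lintegral_congr fun u => hz u
    _ = 0 := lintegral_zero

lemma swapvol :
    volume {v : Fin 5 → ℝ | (∀ i, 0 ≤ v i) ∧ (v 2 + v 3 ≤ 1/2 ∧ ∑ i, v i ≤ 1)}
      = volume {v : Fin 5 → ℝ | (∀ i, 0 ≤ v i) ∧ (v 0 + v 1 ≤ 1/2 ∧ ∑ i, v i ≤ 1)} := by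
  set σ : Fin 5 ≃ Fin 5 := (Equiv.swap 0 2).trans (Equiv.swap 1 3) with hσ
  set F := MeasurableEquiv.piCongrLeft (fun _ : Fin 5 => ℝ) σ with hFdef
  have hmp : MeasurePreserving F volume volume :=
    volume_measurePreserving_piCongrLeft (fun _ : Fin 5 => ℝ) σ
  have hB : MeasurableSet {v : Fin 5 → ℝ | (∀ i, 0 ≤ v i) ∧ (v 2 + v 3 ≤ 1/2 ∧ ∑ i, v i ≤ 1)} :=
    nonnegSet_measurable.inter ((measurableSet_le
      ((measurable_pi_apply (2 : Fin 5)).add (measurable_pi_apply (3 : Fin 5)))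
      measurable_const).inter (measurableSet_le msum measurable_const))
  have hFg : ∀ (g : Fin 5 → ℝ) (i : Fin 5), F g i = g (σ.symm i) := by
    intro g i
    have h1 := MeasurableEquiv.piCongrLeft_apply_apply (β := fun _ : Fin 5 => ℝ) σ g (σ.symm i)
    rwa [Equiv.apply_symm_apply] at h1
  have hpre : F ⁻¹' {v : Fin 5 → ℝ | (∀ i, 0 ≤ v i) ∧ (v 2 + v 3 ≤ 1/2 ∧ ∑ i, v i ≤ 1)}
      = {v : Fin 5 → ℝ | (∀ i, 0 ≤ v i) ∧ (v 0 + v 1 ≤ 1/2 ∧ ∑ i, v i ≤ 1)} := by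
    ext g
    simp only [Set.mem_preimage, Set.mem_setOf_eq]
    have e2 : σ.symm 2 = 0 := by rw [hσ]; decide
    have e3 : σ.symm 3 = 1 := by rw [hσ]; decide
    have hnn : (∀ i, 0 ≤ F g i) ↔ (∀ i, 0 ≤ g i) := by
      constructor
      · intro h i
        have := h (σ i)
        rwa [hFg g (σ i), Equiv.symm_apply_apply] at this
      · intro h i
        rw [hFg g i]; exact h _
    have hsum : ∑ i, F g i = ∑ i, g i := by
      rw [show (∑ i, F g i) = ∑ i, g (σ.symm i) from Finset.sum_congr rfl fun i _ => hFg g i]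
      exact Equiv.sum_comp σ.symm g
    rw [hnn, hsum, hFg g 2, hFg g 3, e2, e3]
  rw [← hmp.measure_preimage hB.nullMeasurableSet, hpre]

lemma cancel_ofReal (a b c : ℝ) (ha : 0 ≤ a) (hb : 0 ≤ b) (hceq : a + b = c) (x : ENNReal)
    (h : ENNReal.ofReal a + x = ENNReal.ofReal c) : x = ENNReal.ofReal b := by
  have h2 : ENNReal.ofReal a + x = ENNReal.ofReal a + ENNReal.ofReal b := by
    rw [h, ← ENNReal.ofReal_add ha hb, hceq]
  exact (ENNReal.add_right_inj (by simp)).mp h2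

lemma Eval :
    volume {v : Fin 5 → ℝ | (∀ i, 0 ≤ v i) ∧ (v 0 + v 1 ≤ 1/2 ∧ v 2 + v 3 ≤ 1/2
        ∧ 1/2 ≤ v 0 + v 1 + v 2 + v 3 ∧ ∑ i, v i ≤ 1)} = ENNReal.ofReal (7/1920) := by
  have hm01 : Measurable (fun v : Fin 5 → ℝ => v 0 + v 1) :=
    (measurable_pi_apply (0 : Fin 5)).add (measurable_pi_apply (1 : Fin 5))
  have hm23 : Measurable (fun v : Fin 5 → ℝ => v 2 + v 3) :=
    (measurable_pi_apply (2 : Fin 5)).add (measurable_pi_apply (3 : Fin 5))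
  set A := {v : Fin 5 → ℝ | (∀ i, 0 ≤ v i) ∧ (1/2 < v 0 + v 1 ∧ ∑ i, v i ≤ 1)} with hA
  set B := {v : Fin 5 → ℝ | (∀ i, 0 ≤ v i) ∧ (1/2 < v 2 + v 3 ∧ ∑ i, v i ≤ 1)} with hB
  set C := {v : Fin 5 → ℝ | (∀ i, 0 ≤ v i) ∧ (v 0 + v 1 + v 2 + v 3 < 1/2 ∧ ∑ i, v i ≤ 1)}
    with hC
  set D := {v : Fin 5 → ℝ | (∀ i, 0 ≤ v i) ∧ (v 0 + v 1 + v 2 + v 3 = 1/2 ∧ ∑ i, v i ≤ 1)}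
    with hD
  set E := {v : Fin 5 → ℝ | (∀ i, 0 ≤ v i) ∧ (v 0 + v 1 ≤ 1/2 ∧ v 2 + v 3 ≤ 1/2
      ∧ 1/2 ≤ v 0 + v 1 + v 2 + v 3 ∧ ∑ i, v i ≤ 1)} with hE
  have hAm : MeasurableSet A := nonnegSet_measurable.inter
    ((measurableSet_lt measurable_const hm01).inter (measurableSet_le msum measurable_const))
  have hBm : MeasurableSet B := nonnegSet_measurable.inter
    ((measurableSet_lt measurable_const hm23).inter (measurableSet_le msum measurable_const))
  have hCm : MeasurableSet C := nonnegSet_measurable.inter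
    ((measurableSet_lt measurable_sum4 measurable_const).inter
      (measurableSet_le msum measurable_const))
  have hDm : MeasurableSet D := nonnegSet_measurable.inter
    (((measurable_sum4 (measurableSet_singleton (1/2)) : MeasurableSet _)).inter
      (measurableSet_le msum measurable_const))
  have hEm : MeasurableSet E := nonnegSet_measurable.inter
    ((measurableSet_le hm01 measurable_const).inter
      ((measurableSet_le hm23 measurable_const).inter
        ((measurableSet_le measurable_const measurable_sum4).inter
          (measurableSet_le msum measurable_const))))
  -- bound on first four coordinates
  have hbound : ∀ v : Fin 5 → ℝ, (∀ i, 0 ≤ v i) → ∑ i, v i ≤ 1 →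
      v 0 + v 1 + v 2 + v 3 ≤ 1 := by
    intro v hnn hs
    rw [Fin.sum_univ_five] at hs
    have h4 := hnn 4
    linarith
  -- volume of T'
  have hT'val : volume {v : Fin 5 → ℝ | (∀ i, 0 ≤ v i) ∧ ∑ i, v i ≤ 1}
      = ENNReal.ofReal (1/120) := by
    have := volume_corner (n := 5) 1 (by norm_num)
    rw [this]
    norm_num [Nat.factorial]
  -- volume of A
  have hAval : volume A = ENNReal.ofReal (3/1920) := by
    have hunion : {v : Fin 5 → ℝ | (∀ i, 0 ≤ v i) ∧ (v 0 + v 1 ≤ 1/2 ∧ ∑ i, v i ≤ 1)} ∪ A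
        = {v : Fin 5 → ℝ | (∀ i, 0 ≤ v i) ∧ ∑ i, v i ≤ 1} := by
      ext v
      simp only [Set.mem_union, Set.mem_setOf_eq, hA]
      constructor
      · rintro (⟨h1, h2, h3⟩ | ⟨h1, h2, h3⟩) <;> exact ⟨h1, h3⟩
      · rintro ⟨h1, h2⟩
        rcases le_or_gt (v 0 + v 1) (1/2) with h | h
        · exact Or.inl ⟨h1, h, h2⟩
        · exact Or.inr ⟨h1, h, h2⟩
    have hdisj : Disjoint
        {v : Fin 5 → ℝ | (∀ i, 0 ≤ v i) ∧ (v 0 + v 1 ≤ 1/2 ∧ ∑ i, v i ≤ 1)} A := by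
      rw [Set.disjoint_left]
      rintro v ⟨h1, h2, h3⟩ ⟨h1', h2', h3'⟩
      linarith
    have hmu := measure_union (μ := volume) hdisj hAm
    rw [hunion, hT'val, V1val] at hmu
    exact cancel_ofReal (13/1920) (3/1920) (1/120) (by norm_num) (by norm_num) (by norm_num)
      _ hmu.symm
  -- volume of B
  have hBval : volume B = ENNReal.ofReal (3/1920) := by
    have hunion : {v : Fin 5 → ℝ | (∀ i, 0 ≤ v i) ∧ (v 2 + v 3 ≤ 1/2 ∧ ∑ i, v i ≤ 1)} ∪ B
        = {v : Fin 5 → ℝ | (∀ i, 0 ≤ v i) ∧ ∑ i, v i ≤ 1} := by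
      ext v
      simp only [Set.mem_union, Set.mem_setOf_eq, hB]
      constructor
      · rintro (⟨h1, h2, h3⟩ | ⟨h1, h2, h3⟩) <;> exact ⟨h1, h3⟩
      · rintro ⟨h1, h2⟩
        rcases le_or_gt (v 2 + v 3) (1/2) with h | h
        · exact Or.inl ⟨h1, h, h2⟩
        · exact Or.inr ⟨h1, h, h2⟩
    have hdisj : Disjoint
        {v : Fin 5 → ℝ | (∀ i, 0 ≤ v i) ∧ (v 2 + v 3 ≤ 1/2 ∧ ∑ i, v i ≤ 1)} B := by
      rw [Set.disjoint_left]
      rintro v ⟨h1, h2, h3⟩ ⟨h1', h2', h3'⟩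
      linarith
    have hmu := measure_union (μ := volume) hdisj hBm
    rw [hunion, hT'val, swapvol, V1val] at hmu
    exact cancel_ofReal (13/1920) (3/1920) (1/120) (by norm_num) (by norm_num) (by norm_num)
      _ hmu.symm
  -- volume of C
  have hCval : volume C = ENNReal.ofReal (3/1920) := by
    have hunion : C ∪ D
        = {v : Fin 5 → ℝ | (∀ i, 0 ≤ v i) ∧ (v 0 + v 1 + v 2 + v 3 ≤ 1/2 ∧ ∑ i, v i ≤ 1)} := by
      ext v
      simp only [Set.mem_union, Set.mem_setOf_eq, hC, hD]
      constructor
      · rintro (⟨h1, h2, h3⟩ | ⟨h1, h2, h3⟩)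
        · exact ⟨h1, le_of_lt h2, h3⟩
        · exact ⟨h1, le_of_eq h2, h3⟩
      · rintro ⟨h1, h2, h3⟩
        rcases lt_or_eq_of_le h2 with h | h
        · exact Or.inl ⟨h1, h, h3⟩
        · exact Or.inr ⟨h1, h, h3⟩
    have hdisj : Disjoint C D := by
      rw [Set.disjoint_left]
      rintro v ⟨h1, h2, h3⟩ ⟨h1', h2', h3'⟩
      linarith
    have hDval : volume D = 0 := by
      refine measure_mono_null ?_ hyper_null
      rintro v ⟨h1, h2, h3⟩
      exact h2
    have hmu := measure_union (μ := volume) hdisj hDm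
    rw [hunion, V3val, hDval, add_zero] at hmu
    rw [hmu]
  -- the big partition
  have hunion : A ∪ (B ∪ (C ∪ E)) = {v : Fin 5 → ℝ | (∀ i, 0 ≤ v i) ∧ ∑ i, v i ≤ 1} := by
    ext v
    simp only [Set.mem_union, Set.mem_setOf_eq, hA, hB, hC, hE]
    constructor
    · rintro (⟨h1, h2, h3⟩ | ⟨h1, h2, h3⟩ | ⟨h1, h2, h3⟩ | ⟨h1, h2⟩)
      · exact ⟨h1, h3⟩
      · exact ⟨h1, h3⟩
      · exact ⟨h1, h3⟩
      · exact ⟨h1, h2.2.2.2⟩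
    · rintro ⟨h1, h2⟩
      rcases le_or_gt (v 0 + v 1) (1/2) with ha | ha
      · rcases le_or_gt (v 2 + v 3) (1/2) with hb | hb
        · rcases le_or_gt (1/2) (v 0 + v 1 + v 2 + v 3) with hc | hc
          · exact Or.inr (Or.inr (Or.inr ⟨h1, ha, hb, hc, h2⟩))
          · exact Or.inr (Or.inr (Or.inl ⟨h1, hc, h2⟩))
        · exact Or.inr (Or.inl ⟨h1, hb, h2⟩)
      · exact Or.inl ⟨h1, ha, h2⟩
  have hd1 : Disjoint A (B ∪ (C ∪ E)) := by
    rw [Set.disjoint_left]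
    rintro v ⟨h1, h2, h3⟩ (⟨h1', h2', h3'⟩ | ⟨h1', h2', h3'⟩ | ⟨h1', h2', h3', h4', h5'⟩)
    · have := hbound v h1 h3; linarith
    · have h20 := h1 2; have h30 := h1 3; linarith
    · linarith
  have hd2 : Disjoint B (C ∪ E) := by
    rw [Set.disjoint_left]
    rintro v ⟨h1, h2, h3⟩ (⟨h1', h2', h3'⟩ | ⟨h1', h2', h3', h4', h5'⟩)
    · have h00 := h1 0; have h10 := h1 1; linarith
    · linarith
  have hd3 : Disjoint C E := by
    rw [Set.disjoint_left]
    rintro v ⟨h1, h2, h3⟩ ⟨h1', h2', h3', h4', h5'⟩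
    linarith
  have hmu : volume (A ∪ (B ∪ (C ∪ E)))
      = volume A + (volume B + (volume C + volume E)) := by
    rw [measure_union hd1 (hBm.union (hCm.union hEm)),
      measure_union hd2 (hCm.union hEm), measure_union hd3 hEm]
  rw [hunion, hT'val, hAval, hBval, hCval] at hmu
  have hmu2 : ENNReal.ofReal (9/1920) + volume E = ENNReal.ofReal (1/120) := by
    rw [hmu]
    rw [← add_assoc, ← add_assoc, ← ENNReal.ofReal_add (by norm_num) (by norm_num),
      ← ENNReal.ofReal_add (by norm_num) (by norm_num)]
    norm_num [add_assoc]
  exact cancel_ofReal (9/1920) (7/1920) (1/120) (by norm_num) (by norm_num) (by norm_num)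
    _ hmu2

theorem stmt14 :
    MeasureTheory.volume
      {v ∈ T | ¬ ((profOf v).X > (profOf v).Y + (profOf v).Z) ∧
               ¬ ((profOf v).Y > (profOf v).X + (profOf v).Z) ∧
               ¬ ((profOf v).Z > (profOf v).X + (profOf v).Y)} =
      (7 / 16) * (1 / 120 : ENNReal) := by
  have hset : {v ∈ T | ¬ ((profOf v).X > (profOf v).Y + (profOf v).Z) ∧
               ¬ ((profOf v).Y > (profOf v).X + (profOf v).Z) ∧
               ¬ ((profOf v).Z > (profOf v).X + (profOf v).Y)}
      = {v : Fin 5 → ℝ | (∀ i, 0 ≤ v i) ∧ (v 0 + v 1 ≤ 1/2 ∧ v 2 + v 3 ≤ 1/2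
          ∧ 1/2 ≤ v 0 + v 1 + v 2 + v 3 ∧ ∑ i, v i ≤ 1)} := by
    ext v
    simp only [Set.mem_setOf_eq, Set.mem_sep_iff, T, profOf, Profile.X, Profile.Y, Profile.Z,
      not_lt, Fin.sum_univ_five, gt_iff_lt]
    constructor
    · rintro ⟨⟨h1, h2⟩, h3, h4, h5⟩
      exact ⟨h1, by linarith, by linarith, by linarith, by linarith⟩
    · rintro ⟨h1, h2, h3, h4, h5⟩
      exact ⟨⟨h1, by linarith⟩, by linarith, by linarith, by linarith⟩
  rw [hset, Eval]
  have h1 : ((7:ENNReal)/16) = ENNReal.ofReal (7/16) := by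
    rw [ENNReal.ofReal_div_of_pos (by norm_num)]
    norm_num
  have h2 : ((1:ENNReal)/120) = ENNReal.ofReal (1/120) := by
    rw [ENNReal.ofReal_div_of_pos (by norm_num)]
    norm_num
  rw [h1, h2, ← ENNReal.ofReal_mul (by norm_num)]
  norm_num
end
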